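/- arXiv:2210.16799 — 5 statements merged into one kernel-verified Lean document; each statement's English description precedes it below -/
import Mathlib

section
/- Let V be a finite-dimensional complex Hilbert space and let S be a set of unitary and antiunitary operators acting irreducibly on V. If T is a linear operator on V such that S T S* = T for every unitary S in the set and S T S* = T* for every antiunitary S in the set, then T = λ·1 for some complex number λ. -/
/-!
Split `T = ℜ T + i • ℑ T` into self-adjoint parts. Every `S` in the set commutes with both:
a unitary `S` commuting with `T` commutes with `T*` as well, while for an antiunitary `S` the
relation `S T = T* S` forces `S T* = T S`, and conjugate-linearity of `S` absorbs the sign change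
of `T - T*` in `ℑ T = -i/2 • (T - T*)`. A self-adjoint operator has a real eigenvalue, so its
eigenspace is invariant under linear and antilinear maps commuting with it; by irreducibility
the eigenspace is everything.
-/

open scoped ComplexConjugate

/-- A unitary map on a complex inner product space, given as a plain function. -/
def IsUnitaryMap {V : Type*} [NormedAddCommGroup V] [InnerProductSpace ℂ V]
    (S : V → V) : Prop :=
  Function.Bijective S ∧ (∀ x y : V, S (x + y) = S x + S y) ∧
    (∀ (a : ℂ) (x : V), S (a • x) = a • S x) ∧
    ∀ x y : V, (inner ℂ (S x) (S y) : ℂ) = inner ℂ x y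

/-- An antiunitary map on a complex inner product space. -/
def IsAntiunitaryMap {V : Type*} [NormedAddCommGroup V] [InnerProductSpace ℂ V]
    (S : V → V) : Prop :=
  Function.Bijective S ∧ (∀ x y : V, S (x + y) = S x + S y) ∧
    (∀ (a : ℂ) (x : V), S (a • x) = conj a • S x) ∧
    ∀ x y : V, (inner ℂ (S x) (S y) : ℂ) = conj (inner ℂ x y : ℂ)

open scoped ComplexStarModule

section

variable {V : Type*} [NormedAddCommGroup V] [InnerProductSpace ℂ V] {S : V → V}

namespace IsUnitaryMap

def toLinearMap (hS : IsUnitaryMap S) : V →ₗ[ℂ] V where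
  toFun := S
  map_add' := hS.2.1
  map_smul' := hS.2.2.1

theorem toLinearMap_apply (hS : IsUnitaryMap S) (x : V) : hS.toLinearMap x = S x := rfl

variable [FiniteDimensional ℂ V] {T : V →ₗ[ℂ] V}

theorem map_adjoint_apply (hS : IsUnitaryMap S) (hT : ∀ x, S (T x) = T (S x)) (x : V) :
    S (T.adjoint x) = T.adjoint (S x) := by
  refine ext_inner_right ℂ fun v ↦ ?_
  obtain ⟨z, rfl⟩ := hS.1.2 v
  rw [hS.2.2.2, LinearMap.adjoint_inner_left, LinearMap.adjoint_inner_left, ← hT, hS.2.2.2]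

theorem map_realPart_apply (hS : IsUnitaryMap S) (hT : ∀ x, S (T x) = T (S x)) (x : V) :
    S ((ℜ T : V →ₗ[ℂ] V) x) = (ℜ T : V →ₗ[ℂ] V) (S x) := by
  simp only [realPart_apply_coe, LinearMap.star_eq_adjoint, LinearMap.smul_apply,
    LinearMap.add_apply, ← hS.toLinearMap_apply, map_add, LinearMap.map_smul_of_tower]
  simp only [hS.toLinearMap_apply, hT, hS.map_adjoint_apply hT]

theorem map_imaginaryPart_apply (hS : IsUnitaryMap S) (hT : ∀ x, S (T x) = T (S x)) (x : V) :
    S ((ℑ T : V →ₗ[ℂ] V) x) = (ℑ T : V →ₗ[ℂ] V) (S x) := by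
  simp only [imaginaryPart_apply_coe, LinearMap.star_eq_adjoint, LinearMap.smul_apply,
    LinearMap.sub_apply, ← hS.toLinearMap_apply, map_sub, LinearMap.map_smul_of_tower]
  simp only [hS.toLinearMap_apply, hT, hS.map_adjoint_apply hT]

end IsUnitaryMap

namespace IsAntiunitaryMap

def toLinearMap (hS : IsAntiunitaryMap S) : V →ₗ⋆[ℂ] V where
  toFun := S
  map_add' := hS.2.1
  map_smul' := hS.2.2.1

theorem toLinearMap_apply (hS : IsAntiunitaryMap S) (x : V) : hS.toLinearMap x = S x := rfl

variable [FiniteDimensional ℂ V] {T : V →ₗ[ℂ] V}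

theorem map_adjoint_apply (hS : IsAntiunitaryMap S) (hT : ∀ x, S (T x) = T.adjoint (S x))
    (x : V) : S (T.adjoint x) = T (S x) := by
  refine ext_inner_right ℂ fun v ↦ ?_
  obtain ⟨z, rfl⟩ := hS.1.2 v
  rw [hS.2.2.2, LinearMap.adjoint_inner_left, ← hS.2.2.2, hT, LinearMap.adjoint_inner_right]

theorem map_realPart_apply (hS : IsAntiunitaryMap S) (hT : ∀ x, S (T x) = T.adjoint (S x))
    (x : V) : S ((ℜ T : V →ₗ[ℂ] V) x) = (ℜ T : V →ₗ[ℂ] V) (S x) := by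
  simp only [realPart_apply_coe, LinearMap.star_eq_adjoint, LinearMap.smul_apply,
    LinearMap.add_apply, ← Complex.coe_smul, ← hS.toLinearMap_apply, map_add, map_smulₛₗ]
  simp only [hS.toLinearMap_apply, hT, hS.map_adjoint_apply hT, Complex.conj_ofReal, add_comm]

theorem map_imaginaryPart_apply (hS : IsAntiunitaryMap S) (hT : ∀ x, S (T x) = T.adjoint (S x))
    (x : V) : S ((ℑ T : V →ₗ[ℂ] V) x) = (ℑ T : V →ₗ[ℂ] V) (S x) := by
  simp only [imaginaryPart_apply_coe, LinearMap.star_eq_adjoint, LinearMap.smul_apply,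
    LinearMap.sub_apply, ← Complex.coe_smul, ← hS.toLinearMap_apply, map_sub, map_smulₛₗ]
  simp only [hS.toLinearMap_apply, hT, hS.map_adjoint_apply hT, Complex.conj_ofReal,
    Complex.conj_I, map_neg]
  module

end IsAntiunitaryMap

theorem mapsTo_eigenspace_of_commute (hS : IsUnitaryMap S ∨ IsAntiunitaryMap S)
    {C : V →ₗ[ℂ] V} (hC : ∀ x, S (C x) = C (S x)) {μ : ℂ} (hμ : conj μ = μ) :
    Set.MapsTo S (Module.End.eigenspace C μ) (Module.End.eigenspace C μ) := by
  intro x hx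
  rw [SetLike.mem_coe, Module.End.mem_eigenspace_iff] at hx ⊢
  rcases hS with hU | hA
  · rw [← hC, hx, hU.2.2.1]
  · rw [← hC, hx, hA.2.2.1, hμ]

variable [FiniteDimensional ℂ V]

theorem LinearMap.IsSymmetric.exists_eq_smul_id_of_irreducible (𝒮 : Set (V → V))
    (hS : ∀ S ∈ 𝒮, IsUnitaryMap S ∨ IsAntiunitaryMap S)
    (hirr : ∀ W : Submodule ℂ V, (∀ S ∈ 𝒮, ∀ x ∈ W, S x ∈ W) → W = ⊥ ∨ W = ⊤)
    {C : V →ₗ[ℂ] V} (hC : C.IsSymmetric) (hcomm : ∀ S ∈ 𝒮, ∀ x, S (C x) = C (S x)) :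
    ∃ c : ℂ, C = c • LinearMap.id := by
  cases subsingleton_or_nontrivial V
  · exact ⟨0, Subsingleton.elim _ _⟩
  obtain ⟨μ, hμ⟩ := Module.End.exists_eigenvalue C
  obtain hbot | htop := hirr _ fun S h ↦
    mapsTo_eigenspace_of_commute (hS S h) (hcomm S h) (hC.conj_eigenvalue_eq_self hμ)
  · exact absurd hbot hμ
  · exact ⟨μ, LinearMap.ext fun x ↦
      Module.End.mem_eigenspace_iff.mp (htop ▸ Submodule.mem_top : x ∈ _)⟩

end

/-- Schur's lemma for a set of unitary and antiunitary operators acting irreducibly on a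
finite-dimensional complex Hilbert space: if a linear operator `T` satisfies
`S T S* = T` (i.e. `S T = T S`) for all unitary `S` in the set and `S T S* = T*`
(i.e. `S T = T* S`) for all antiunitary `S` in the set, then `T` is a complex multiple
of the identity. -/
theorem schur_lemma_general {V : Type*} [NormedAddCommGroup V]
    [InnerProductSpace ℂ V] [FiniteDimensional ℂ V]
    (𝒮 : Set (V → V)) (hS : ∀ S ∈ 𝒮, IsUnitaryMap S ∨ IsAntiunitaryMap S)
    (hirr : ∀ W : Submodule ℂ V, (∀ S ∈ 𝒮, ∀ x ∈ W, S x ∈ W) → W = ⊥ ∨ W = ⊤)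
    (T : V →ₗ[ℂ] V)
    (hsymU : ∀ S ∈ 𝒮, IsUnitaryMap S → ∀ x : V, S (T x) = T (S x))
    (hsymA : ∀ S ∈ 𝒮, IsAntiunitaryMap S → ∀ x : V,
      S (T x) = (LinearMap.adjoint T) (S x)) :
    ∃ c : ℂ, T = c • LinearMap.id := by
  have hsym (A : selfAdjoint (V →ₗ[ℂ] V)) : (A : V →ₗ[ℂ] V).IsSymmetric :=
    (LinearMap.isSymmetric_iff_isSelfAdjoint _).mpr A.2
  obtain ⟨a, ha⟩ := (hsym (ℜ T)).exists_eq_smul_id_of_irreducible 𝒮 hS hirr fun S h ↦ by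
    rcases hS S h with hU | hA
    exacts [hU.map_realPart_apply (hsymU S h hU), hA.map_realPart_apply (hsymA S h hA)]
  obtain ⟨b, hb⟩ := (hsym (ℑ T)).exists_eq_smul_id_of_irreducible 𝒮 hS hirr fun S h ↦ by
    rcases hS S h with hU | hA
    exacts [hU.map_imaginaryPart_apply (hsymU S h hU), hA.map_imaginaryPart_apply (hsymA S h hA)]
  refine ⟨a + Complex.I * b, ?_⟩
  rw [← realPart_add_I_smul_imaginaryPart T, ha, hb, smul_smul, add_smul]
end

section
/- Let A be a closed operator with Riesz projection P associated to a circle {|μ − λ| = r} ⊂ ρ(A), and let P̄ = 1 − P. Then for |z − λ| < r, the operator A − z restricted to Ran P̄ ∩ D(A) is invertible, and its inverse composed with P̄ equals R̂_z = −(1/2πi) ∮_{|μ−λ|=r} (z − μ)⁻¹ (A − μ)⁻¹ dμ; in particular (A − z) R̂_z = P̄ and R̂_z (A − z) ⊆ P̄, and R̂_z P = P R̂_z = 0. -/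
open MeasureTheory

/-- The Riesz projection `P = -(2πi)⁻¹ ∮_{|μ-λ|=r} (A-μ)⁻¹ dμ`, expressed through the
resolvent family `R μ = (A - μ)⁻¹` and the parametrization `μ = λ + r e^{iθ}`. -/
noncomputable def rieszProjection {H : Type*} [NormedAddCommGroup H]
    [InnerProductSpace ℂ H] [CompleteSpace H]
    (R : ℂ → H →L[ℂ] H) (lam : ℂ) (r : ℝ) : H →L[ℂ] H :=
  (-(2 * (Real.pi : ℂ) * Complex.I)⁻¹) •
    ∫ θ in (0:ℝ)..(2 * Real.pi),
      (Complex.I * r * Complex.exp (θ * Complex.I)) •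
        R (lam + r * Complex.exp (θ * Complex.I))

/-- The reduced resolvent `R̂_z = -(2πi)⁻¹ ∮_{|μ-λ|=r} (z-μ)⁻¹ (A-μ)⁻¹ dμ`. -/
noncomputable def reducedResolvent {H : Type*} [NormedAddCommGroup H]
    [InnerProductSpace ℂ H] [CompleteSpace H]
    (R : ℂ → H →L[ℂ] H) (lam : ℂ) (r : ℝ) (z : ℂ) : H →L[ℂ] H :=
  (-(2 * (Real.pi : ℂ) * Complex.I)⁻¹) •
    ∫ θ in (0:ℝ)..(2 * Real.pi),
      ((z - (lam + r * Complex.exp (θ * Complex.I)))⁻¹ *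
          (Complex.I * r * Complex.exp (θ * Complex.I))) •
        R (lam + r * Complex.exp (θ * Complex.I))

/-!
Under the integral, `(z - μ)⁻¹ (A - z) (A - μ)⁻¹ = (z - μ)⁻¹ - (A - μ)⁻¹`, and the same holds for
`(A - μ)⁻¹ (A - z)` on `D(A)`; since `A` is closed it commutes with the contour integral, and
`∮ (z - μ)⁻¹ dμ = -2πi` turns both into `1 - P`.

For `P R̂_z = 0`: the resolvent set is open and `μ ↦ (A - μ)⁻¹` is holomorphic on it (Neumann
series), so `P` may be computed on a smaller circle `|ν - λ| = ρ` that still encloses `z`. By the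
resolvent identity and `∮ (z - μ)⁻¹ (μ - ν)⁻¹ dμ = 0` (both poles inside), `P R̂_z` becomes a double
integral of `(μ - ν)⁻¹ (z - μ)⁻¹ (A - μ)⁻¹`, which vanishes when integrated in `ν` first, because
every `μ` lies outside the small circle. Applying `R̂_z` to `(A - z) R̂_z = 1 - P` then gives
`R̂_z P = P R̂_z`.
-/

open Metric Complex Topology Set Real

namespace LinearPMap

variable {E : Type*} [NormedAddCommGroup E] [NormedSpace ℂ E]

structure IsResolventAt (A : E →ₗ.[ℂ] E) (μ : ℂ) (T : E →L[ℂ] E) : Prop where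
  mem_domain : ∀ y, T y ∈ A.domain
  right_inv : ∀ y (h : T y ∈ A.domain), A ⟨T y, h⟩ - μ • T y = y
  left_inv : ∀ x (hx : x ∈ A.domain), T (A ⟨x, hx⟩ - μ • x) = x

variable {A : E →ₗ.[ℂ] E} {μ ν : ℂ} {T S : E →L[ℂ] E}

namespace IsResolventAt

theorem unique (hT : IsResolventAt A μ T) (hS : IsResolventAt A μ S) : T = S := by
  ext y
  simpa [hT.right_inv y (hT.mem_domain y)] using (hS.left_inv (T y) (hT.mem_domain y)).symm

theorem resolvent_identity (hT : IsResolventAt A μ T) (hS : IsResolventAt A ν S) (hne : μ ≠ ν)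
    (y : E) : T (S y) = (ν - μ)⁻¹ • (S y - T y) := by
  have hSy := hS.mem_domain y
  have hshift : A ⟨S y, hSy⟩ - μ • S y = y + (ν - μ) • S y := by
    calc A ⟨S y, hSy⟩ - μ • S y = (A ⟨S y, hSy⟩ - ν • S y) + (ν - μ) • S y := by module
      _ = y + (ν - μ) • S y := by rw [hS.right_inv y hSy]
  have h := hT.left_inv (S y) hSy
  rw [hshift, T.map_add, T.map_smul] at h
  rw [← eq_sub_of_add_eq' h, inv_smul_smul₀ (sub_ne_zero.2 hne.symm)]

theorem of_isUnit (hT : IsResolventAt A μ T) (hu : IsUnit (1 - (ν - μ) • T)) :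
    IsResolventAt A ν (T * Ring.inverse (1 - (ν - μ) • T)) := by
  obtain ⟨u, hu⟩ := hu
  have hTu : Commute T ↑u⁻¹ := Commute.units_inv_right <|
    hu ▸ (Commute.one_right T).sub_right ((Commute.refl T).smul_right _)
  have hshift : ∀ x (hx : x ∈ A.domain),
      A ⟨x, hx⟩ - ν • x = (A ⟨x, hx⟩ - μ • x) - (ν - μ) • x := fun _ _ => by module
  rw [← hu, Ring.inverse_unit]
  refine ⟨fun y => hT.mem_domain _, fun y h => ?_, fun x hx => ?_⟩
  · simp only [mul_apply_eq_comp] at h ⊢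
    rw [hshift, hT.right_inv]
    have h1 := congr($(u.mul_inv) y)
    rw [mul_apply_eq_comp, hu] at h1
    simpa using h1
  · rw [hTu.eq, mul_apply_eq_comp, hshift, T.map_sub, T.map_smul, hT.left_inv]
    have h1 := congr($(u.inv_mul) x)
    rw [mul_apply_eq_comp, hu] at h1
    simpa using h1

end IsResolventAt

def resolventSet (A : E →ₗ.[ℂ] E) : Set ℂ := {μ | ∃ T, IsResolventAt A μ T}

open Classical in
/-- The resolvent `(A - μ)⁻¹` on `resolventSet A`, and the junk value `0` off it. -/
noncomputable def resolvent (A : E →ₗ.[ℂ] E) (μ : ℂ) : E →L[ℂ] E :=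
  if h : μ ∈ resolventSet A then h.choose else 0

theorem isResolventAt_resolvent (h : μ ∈ resolventSet A) : IsResolventAt A μ (resolvent A μ) := by
  rw [resolvent, dif_pos h]
  exact h.choose_spec

theorem IsResolventAt.resolvent_eq (hT : IsResolventAt A μ T) : resolvent A μ = T :=
  (isResolventAt_resolvent ⟨T, hT⟩).unique hT

section Complete

variable [CompleteSpace E]

theorem IsResolventAt.eventually_isResolventAt (hT : IsResolventAt A μ T) :
    ∀ᶠ ν in 𝓝 μ, IsResolventAt A ν (T * Ring.inverse (1 - (ν - μ) • T)) := by
  have hunit : ∀ᶠ ν in 𝓝 μ, IsUnit (1 - (ν - μ) • T) :=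
    (by fun_prop : Continuous fun ν : ℂ => 1 - (ν - μ) • T).continuousAt.eventually_mem
      (Units.isOpen.mem_nhds (by simp))
  exact hunit.mono fun _ hν => hT.of_isUnit hν

theorem isOpen_resolventSet : IsOpen (resolventSet A) :=
  isOpen_iff_mem_nhds.2 fun _ ⟨_, hT⟩ => hT.eventually_isResolventAt.mono fun _ h => ⟨_, h⟩

theorem differentiableAt_resolvent (h : μ ∈ resolventSet A) :
    DifferentiableAt ℂ (resolvent A) μ := by
  obtain ⟨T, hT⟩ := h
  have heq : resolvent A =ᶠ[𝓝 μ] fun ν => T * Ring.inverse (1 - (ν - μ) • T) :=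
    hT.eventually_isResolventAt.mono fun _ hν => hν.resolvent_eq
  rw [heq.differentiableAt_iff]
  exact (differentiableAt_const T).mul (DifferentiableAt.inverse (by fun_prop) (by simp))

theorem circleIntegral_resolvent_eq_of_annulus_subset {c : ℂ} {ρ r : ℝ} (hρ : 0 < ρ)
    (hρr : ρ ≤ r) (hsub : closedBall c r \ ball c ρ ⊆ resolventSet A) :
    ∮ μ in C(c, r), resolvent A μ = ∮ μ in C(c, ρ), resolvent A μ :=
  circleIntegral_eq_of_differentiable_on_annulus_off_countable hρ hρr countable_empty
    (fun _ hμ => (differentiableAt_resolvent (hsub hμ)).continuousAt.continuousWithinAt)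
    fun _ hμ => differentiableAt_resolvent
      (hsub (sdiff_subset_sdiff ball_subset_closedBall ball_subset_closedBall hμ.1))

end Complete

end LinearPMap

section CircleIntegral

variable {E F : Type*} [NormedAddCommGroup E] [NormedSpace ℂ E] [NormedAddCommGroup F]
  [NormedSpace ℂ F] {c : ℂ} {R : ℝ}

theorem ContinuousLinearMap.circleIntegral_comp_comm [CompleteSpace E] [CompleteSpace F]
    (L : E →L[ℂ] F) {f : ℂ → E} (hf : CircleIntegrable f c R) :
    ∮ z in C(c, R), L (f z) = L (∮ z in C(c, R), f z) := by
  rw [circleIntegral, circleIntegral, ← L.intervalIntegral_comp_comm hf.out]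
  simp only [L.map_smul]

theorem ContinuousLinearMap.circleIntegral_apply [CompleteSpace F] {f : ℂ → E →L[ℂ] F}
    (hf : CircleIntegrable f c R) (x : E) :
    (∮ z in C(c, R), f z) x = ∮ z in C(c, R), f z x :=
  ((ContinuousLinearMap.apply ℂ F x).circleIntegral_comp_comm hf).symm

theorem continuousOn_inv_sub_of_mem_ball {z : ℂ} (hz : z ∈ ball c R) :
    ContinuousOn (fun μ => (z - μ)⁻¹) (sphere c R) :=
  (continuousOn_const.sub continuousOn_id).inv₀ fun _ hμ =>
    sub_ne_zero.2 (sphere_disjoint_ball.ne_of_mem hμ hz).symm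

theorem ContinuousOn.inv_sub_smul {g : ℂ → E} (hg : ContinuousOn g (sphere c R)) {z : ℂ}
    (hz : z ∈ ball c R) : ContinuousOn (fun μ => (z - μ)⁻¹ • g μ) (sphere c R) :=
  (continuousOn_inv_sub_of_mem_ball hz).smul hg

theorem Submodule.circleIntegral_mem [CompleteSpace E] {S : Submodule ℂ E}
    (hS : IsClosed (S : Set E)) (hR : 0 ≤ R) {f : ℂ → E} (hf : ContinuousOn f (sphere c R))
    (hfS : ∀ z ∈ sphere c R, f z ∈ S) : ∮ z in C(c, R), f z ∈ S := by
  have : CompleteSpace S := hS.completeSpace_coe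
  let g : ℝ → S := fun θ => ⟨deriv (circleMap c R) θ • f (circleMap c R θ),
    S.smul_mem _ (hfS _ (circleMap_mem_sphere c hR θ))⟩
  have hg : Continuous g := by
    refine Continuous.subtype_mk ?_ _
    simp only [deriv_circleMap]
    exact (by fun_prop : Continuous fun θ => circleMap 0 R θ * I).smul
      (hf.comp_continuous (continuous_circleMap c R) (circleMap_mem_sphere c hR))
  have h := S.subtypeL.intervalIntegral_comp_comm (hg.intervalIntegrable (μ := volume) 0 (2 * π))
  rw [circleIntegral]
  exact h ▸ (∫ θ in (0 : ℝ)..2 * π, g θ).2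

theorem LinearPMap.circleIntegral_mem_graph [CompleteSpace E] [CompleteSpace F]
    {A : E →ₗ.[ℂ] F} (hA : A.IsClosed) (hR : 0 ≤ R) {f : ℂ → E}
    {g : ℂ → F} (hf : ContinuousOn f (sphere c R)) (hg : ContinuousOn g (sphere c R))
    (hfg : ∀ z ∈ sphere c R, (f z, g z) ∈ A.graph) :
    (∮ z in C(c, R), f z, ∮ z in C(c, R), g z) ∈ A.graph := by
  have hint := (hf.prodMk hg).circleIntegrable hR
  convert A.graph.circleIntegral_mem hA hR (hf.prodMk hg) hfg using 1
  exact Prod.ext ((ContinuousLinearMap.fst ℂ E F).circleIntegral_comp_comm hint)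
    ((ContinuousLinearMap.snd ℂ E F).circleIntegral_comp_comm hint)

theorem circleIntegral_circleIntegral_swap {F : ℂ → ℂ → E} {c₁ c₂ : ℂ} {R₁ R₂ : ℝ}
    (hR₁ : 0 ≤ R₁) (hR₂ : 0 ≤ R₂)
    (hF : ContinuousOn (Function.uncurry F) (sphere c₁ R₁ ×ˢ sphere c₂ R₂)) :
    ∮ z in C(c₁, R₁), ∮ w in C(c₂, R₂), F z w = ∮ w in C(c₂, R₂), ∮ z in C(c₁, R₁), F z w := by
  have hG : Continuous fun p : ℝ × ℝ => deriv (circleMap c₁ R₁) p.1 •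
      deriv (circleMap c₂ R₂) p.2 • F (circleMap c₁ R₁ p.1) (circleMap c₂ R₂ p.2) := by
    simp only [deriv_circleMap]
    refine (by fun_prop : Continuous fun p : ℝ × ℝ => circleMap 0 R₁ p.1 * I).smul
      ((by fun_prop : Continuous fun p : ℝ × ℝ => circleMap 0 R₂ p.2 * I).smul ?_)
    exact hF.comp_continuous (((continuous_circleMap c₁ R₁).comp continuous_fst).prodMk
      ((continuous_circleMap c₂ R₂).comp continuous_snd)) fun p : ℝ × ℝ =>
      ⟨circleMap_mem_sphere c₁ hR₁ p.1, circleMap_mem_sphere c₂ hR₂ p.2⟩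
  simp only [circleIntegral, ← intervalIntegral.integral_smul]
  rw [intervalIntegral_intervalIntegral_swap]
  · simp only [smul_comm (deriv (circleMap c₁ R₁) _)]
  · exact (hG.continuousOn.integrableOn_compact (isCompact_uIcc.prod isCompact_uIcc)).mono_set
      (prod_mono uIoc_subset_uIcc uIoc_subset_uIcc)

theorem circleIntegral_inv_sub_of_mem_ball {z : ℂ} (hz : z ∈ ball c R) :
    ∮ μ in C(c, R), (z - μ)⁻¹ = -(2 * π * I) := by
  calc ∮ μ in C(c, R), (z - μ)⁻¹ = ∮ μ in C(c, R), -1 * (μ - z)⁻¹ := by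
        simp only [← neg_sub _ z, inv_neg, neg_one_mul]
    _ = -(2 * π * I) := by
        rw [circleIntegral.integral_const_mul, circleIntegral.integral_sub_inv_of_mem_ball hz,
          neg_one_mul]

theorem circleIntegral_inv_sub_mul_sub_inv_of_mem_ball {z w : ℂ} (hz : z ∈ ball c R)
    (hw : w ∈ ball c R) (hzw : z ≠ w) : ∮ μ in C(c, R), (z - μ)⁻¹ * (μ - w)⁻¹ = 0 := by
  have hR : 0 ≤ R := (dist_nonneg.trans_lt hz).le
  have hpf : EqOn (fun μ => (z - μ)⁻¹ * (μ - w)⁻¹)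
      (fun μ => (z - w)⁻¹ * ((μ - w)⁻¹ - (μ - z)⁻¹)) (sphere c R) := fun μ hμ => by
    have hμz : μ - z ≠ 0 := sub_ne_zero.2 (sphere_disjoint_ball.ne_of_mem hμ hz)
    have hμw : μ - w ≠ 0 := sub_ne_zero.2 (sphere_disjoint_ball.ne_of_mem hμ hw)
    have hzμ : z - μ ≠ 0 := by rwa [← neg_sub, neg_ne_zero]
    field_simp [sub_ne_zero.2 hzw]
    ring
  rw [circleIntegral.integral_congr hR hpf, circleIntegral.integral_const_mul,
    circleIntegral.integral_sub (circleIntegrable_sub_inv_iff.2 (Or.inr ?_))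
      (circleIntegrable_sub_inv_iff.2 (Or.inr ?_)),
    circleIntegral.integral_sub_inv_of_mem_ball hw, circleIntegral.integral_sub_inv_of_mem_ball hz,
    sub_self, mul_zero]
  all_goals rw [abs_of_nonneg hR]
  exacts [fun h => sphere_disjoint_ball.ne_of_mem h hw rfl,
    fun h => sphere_disjoint_ball.ne_of_mem h hz rfl]

theorem circleIntegral_inv_sub_of_notMem_closedBall {w : ℂ} (hR : 0 ≤ R)
    (hw : w ∉ closedBall c R) : ∮ z in C(c, R), (w - z)⁻¹ = 0 := by
  have hne : ∀ z ∈ closedBall c R, w - z ≠ 0 := fun z hz h => hw (sub_eq_zero.1 h ▸ hz)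
  exact ((differentiableOn_const w).sub differentiableOn_id |>.inv hne).diffContOnCl_ball
    subset_rfl |>.circleIntegral_eq_zero hR

theorem circleIntegral_circleIntegral_sub_inv_smul_eq_zero [CompleteSpace E] {ρ r : ℝ}
    (hρ : 0 ≤ ρ) (hρr : ρ < r)
    {g : ℂ → E} (hg : ContinuousOn g (sphere c r)) :
    ∮ ν in C(c, ρ), ∮ μ in C(c, r), (μ - ν)⁻¹ • g μ = 0 := by
  have hne : ∀ p ∈ sphere c ρ ×ˢ sphere c r, p.2 - p.1 ≠ 0 := fun p hp =>
    sub_ne_zero.2 fun h => hρr.ne (by rw [← mem_sphere.1 hp.1, ← mem_sphere.1 hp.2, h])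
  have hF : ContinuousOn (fun p : ℂ × ℂ => (p.2 - p.1)⁻¹ • g p.2) (sphere c ρ ×ˢ sphere c r) :=
    ((continuousOn_snd.sub continuousOn_fst).inv₀ hne).smul (hg.comp continuousOn_snd
      fun p hp => hp.2)
  rw [circleIntegral_circleIntegral_swap (F := fun ν μ => (μ - ν)⁻¹ • g μ) hρ
    (hρ.trans hρr.le) hF]
  calc (∮ μ in C(c, r), ∮ ν in C(c, ρ), (μ - ν)⁻¹ • g μ) = ∮ μ in C(c, r), (0 : E) :=
        circleIntegral.integral_congr (hρ.trans hρr.le) fun μ hμ => by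
          rw [circleIntegral.integral_smul_const, circleIntegral_inv_sub_of_notMem_closedBall hρ
            fun h => hρr.not_ge (mem_sphere.1 hμ ▸ mem_closedBall.1 h), zero_smul]
    _ = 0 := by simp [circleIntegral]

end CircleIntegral

section Annulus

variable {E : Type*} [NormedAddCommGroup E] [NormedSpace ℝ E] {c : E} {ρ r : ℝ}

theorem closedBall_sdiff_ball_subset_cthickening_sphere (hρ : 0 < ρ) :
    closedBall c r \ ball c ρ ⊆ cthickening (r - ρ) (sphere c r) := by
  rintro x ⟨hxr, hxρ⟩
  rw [mem_closedBall_iff_norm] at hxr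
  rw [mem_ball_iff_norm, not_lt] at hxρ
  have hd : 0 < ‖x - c‖ := hρ.trans_le hxρ
  refine mem_cthickening_of_dist_le x (c + (r / ‖x - c‖) • (x - c)) _ _ ?_ ?_
  · rw [mem_sphere_iff_norm, add_sub_cancel_left, norm_smul, Real.norm_eq_abs,
      abs_of_nonneg (div_nonneg (hd.le.trans hxr) hd.le), div_mul_cancel₀ _ hd.ne']
  · rw [dist_eq_norm, show x - (c + (r / ‖x - c‖) • (x - c)) = (1 - r / ‖x - c‖) • (x - c) by
      module, norm_smul, Real.norm_eq_abs, abs_of_nonpos (sub_nonpos.2 ((one_le_div hd).2 hxr)),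
      neg_sub, sub_mul, div_mul_cancel₀ _ hd.ne', one_mul]
    linarith

theorem exists_closedBall_sdiff_ball_subset [ProperSpace E] {U : Set E} {z : E} (hU : IsOpen U)
    (hsub : sphere c r ⊆ U) (hz : z ∈ ball c r) :
    ∃ ρ, 0 < ρ ∧ ρ < r ∧ z ∈ ball c ρ ∧ closedBall c r \ ball c ρ ⊆ U := by
  obtain ⟨δ, hδ, hδU⟩ := (isCompact_sphere c r).exists_cthickening_subset_open hU hsub
  rw [mem_ball] at hz
  have hρ : 0 < (dist z c + r) / 2 := by linarith [dist_nonneg (x := z) (y := c)]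
  refine ⟨max (r - δ) ((dist z c + r) / 2), hρ.trans_le (le_max_right _ _),
    max_lt (by linarith) (by linarith), mem_ball.2 ((by linarith : dist z c < _).trans_le
      (le_max_right _ _)), ?_⟩
  exact (closedBall_sdiff_ball_subset_cthickening_sphere (hρ.trans_le (le_max_right _ _))).trans
    ((cthickening_mono (by linarith [le_max_left (r - δ) ((dist z c + r) / 2)]) _).trans hδU)

end Annulus

section Riesz

variable {H : Type*} [NormedAddCommGroup H] [InnerProductSpace ℂ H] [CompleteSpace H]
  {A : H →ₗ.[ℂ] H} {R : ℂ → H →L[ℂ] H} {c z : ℂ} {r : ℝ}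

theorem rieszProjection_eq_circleIntegral (R : ℂ → H →L[ℂ] H) (c : ℂ) (r : ℝ) :
    rieszProjection R c r = -(2 * π * I)⁻¹ • ∮ μ in C(c, r), R μ := by
  rw [rieszProjection, circleIntegral]
  congr 1
  refine intervalIntegral.integral_congr fun θ _ => ?_
  simp only [deriv_circleMap, circleMap, zero_add]
  ring_nf

theorem reducedResolvent_eq_circleIntegral (R : ℂ → H →L[ℂ] H) (c : ℂ) (r : ℝ) (z : ℂ) :
    reducedResolvent R c r z = -(2 * π * I)⁻¹ • ∮ μ in C(c, r), (z - μ)⁻¹ • R μ := by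
  rw [reducedResolvent, circleIntegral]
  congr 1
  refine intervalIntegral.integral_congr fun θ _ => ?_
  simp only [deriv_circleMap, circleMap, zero_add, smul_smul]
  ring_nf

theorem rieszProjection_apply (hRc : ContinuousOn R (sphere c r)) (hr : 0 ≤ r) (y : H) :
    rieszProjection R c r y = -(2 * π * I)⁻¹ • ∮ μ in C(c, r), R μ y := by
  rw [rieszProjection_eq_circleIntegral, smul_apply,
    ContinuousLinearMap.circleIntegral_apply (hRc.circleIntegrable hr)]

theorem reducedResolvent_apply (hRc : ContinuousOn R (sphere c r)) (hz : z ∈ ball c r) (y : H) :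
    reducedResolvent R c r z y = -(2 * π * I)⁻¹ • ∮ μ in C(c, r), (z - μ)⁻¹ • R μ y := by
  rw [reducedResolvent_eq_circleIntegral, smul_apply,
    ContinuousLinearMap.circleIntegral_apply
      ((hRc.inv_sub_smul hz).circleIntegrable (dist_nonneg.trans_lt hz).le)]
  rfl

theorem smul_circleIntegral_inv_sub_smul_eq_sub_rieszProjection
    (hRc : ContinuousOn R (sphere c r)) (hz : z ∈ ball c r) (y : H) :
    -(2 * π * I)⁻¹ • ∮ μ in C(c, r), (z - μ)⁻¹ • (y + (μ - z) • R μ y) =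
      y - rieszProjection R c r y := by
  have hr : 0 ≤ r := (dist_nonneg.trans_lt hz).le
  have hpt : EqOn (fun μ => (z - μ)⁻¹ • (y + (μ - z) • R μ y))
      (fun μ => (z - μ)⁻¹ • y - R μ y) (sphere c r) := fun μ hμ => by
    have hzμ : z - μ ≠ 0 := sub_ne_zero.2 (sphere_disjoint_ball.ne_of_mem hμ hz).symm
    dsimp only
    rw [smul_add, smul_smul, ← neg_sub z μ, mul_neg, inv_mul_cancel₀ hzμ]
    module
  rw [circleIntegral.integral_congr hr hpt,
    circleIntegral.integral_sub ((continuousOn_const.inv_sub_smul hz).circleIntegrable hr)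
      ((hRc.clm_apply continuousOn_const).circleIntegrable hr),
    circleIntegral.integral_smul_const, circleIntegral_inv_sub_of_mem_ball hz,
    rieszProjection_apply hRc hr, smul_sub, smul_smul, neg_mul_neg,
    inv_mul_cancel₀ two_pi_I_ne_zero, one_smul]

theorem exists_sub_smul_reducedResolvent_eq (hA : A.IsClosed)
    (hR : ∀ μ ∈ sphere c r, A.IsResolventAt μ (R μ)) (hRc : ContinuousOn R (sphere c r))
    (hz : z ∈ ball c r) (y : H) :
    ∃ h : reducedResolvent R c r z y ∈ A.domain,
      A ⟨reducedResolvent R c r z y, h⟩ - z • reducedResolvent R c r z y =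
        y - rieszProjection R c r y := by
  have hr : 0 ≤ r := (dist_nonneg.trans_lt hz).le
  have hRy : ContinuousOn (fun μ => R μ y) (sphere c r) := hRc.clm_apply continuousOn_const
  have hARy : ContinuousOn (fun μ => y + μ • R μ y) (sphere c r) :=
    continuousOn_const.add (continuousOn_id.smul hRy)
  have hgraph := A.circleIntegral_mem_graph hA hr (hRy.inv_sub_smul hz) (hARy.inv_sub_smul hz)
    fun μ hμ => by
      refine (A.mem_graph_iff).2 ⟨(z - μ)⁻¹ • ⟨R μ y, (hR μ hμ).mem_domain y⟩, rfl, ?_⟩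
      rw [A.map_smul, sub_eq_iff_eq_add.1 ((hR μ hμ).right_inv y _)]
  have hgraph' : (reducedResolvent R c r z y,
      -(2 * π * I)⁻¹ • ∮ μ in C(c, r), (z - μ)⁻¹ • (y + μ • R μ y)) ∈ A.graph := by
    rw [reducedResolvent_apply hRc hz]
    exact A.graph.smul_mem _ hgraph
  refine ⟨A.mem_domain_of_mem_graph hgraph', ?_⟩
  have hzf : CircleIntegrable (fun μ => z • ((z - μ)⁻¹ • R μ y)) c r :=
    (continuousOn_const.smul (hRy.inv_sub_smul hz)).circleIntegrable hr
  rw [← (A.image_iff _).2 hgraph', reducedResolvent_apply hRc hz,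
    ← smul_circleIntegral_inv_sub_smul_eq_sub_rieszProjection hRc hz y, smul_comm z, ← smul_sub,
    ← circleIntegral.integral_smul,
    ← circleIntegral.integral_sub ((hARy.inv_sub_smul hz).circleIntegrable hr) hzf]
  congr 2
  ext μ
  module

theorem reducedResolvent_apply_sub_smul (hR : ∀ μ ∈ sphere c r, A.IsResolventAt μ (R μ))
    (hRc : ContinuousOn R (sphere c r)) (hz : z ∈ ball c r) (x : H) (hx : x ∈ A.domain) :
    reducedResolvent R c r z (A ⟨x, hx⟩ - z • x) = x - rieszProjection R c r x := by
  rw [reducedResolvent_apply hRc hz,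
    ← smul_circleIntegral_inv_sub_smul_eq_sub_rieszProjection hRc hz x]
  congr 1
  refine circleIntegral.integral_congr (dist_nonneg.trans_lt hz).le fun μ hμ => ?_
  rw [show A ⟨x, hx⟩ - z • x = (A ⟨x, hx⟩ - μ • x) + (μ - z) • x by module, map_add, map_smul,
    (hR μ hμ).left_inv]

theorem LinearPMap.IsResolventAt.apply_reducedResolvent {ν : ℂ} {T : H →L[ℂ] H}
    (hT : A.IsResolventAt ν T)
    (hR : ∀ μ ∈ sphere c r, A.IsResolventAt μ (R μ)) (hRc : ContinuousOn R (sphere c r))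
    (hz : z ∈ ball c r) (hν : ν ∈ ball c r) (hzν : z ≠ ν) (y : H) :
    T (reducedResolvent R c r z y) =
      -(2 * π * I)⁻¹ • ∮ μ in C(c, r), (μ - ν)⁻¹ • (z - μ)⁻¹ • R μ y := by
  have hr : 0 ≤ r := (dist_nonneg.trans_lt hz).le
  have hRy : ContinuousOn (fun μ => (z - μ)⁻¹ • R μ y) (sphere c r) :=
    (hRc.clm_apply continuousOn_const).inv_sub_smul hz
  have hνμ : ContinuousOn (fun μ => (μ - ν)⁻¹) (sphere c r) :=
    (continuousOn_id.sub continuousOn_const).inv₀ fun _ hμ =>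
      sub_ne_zero.2 (sphere_disjoint_ball.ne_of_mem hμ hν)
  have hpt : EqOn (fun μ => T ((z - μ)⁻¹ • R μ y))
      (fun μ => (μ - ν)⁻¹ • (z - μ)⁻¹ • R μ y - ((z - μ)⁻¹ * (μ - ν)⁻¹) • T y)
      (sphere c r) := fun μ hμ => by
    dsimp only
    rw [T.map_smul, hT.resolvent_identity (hR μ hμ)
      (sphere_disjoint_ball.ne_of_mem hμ hν).symm]
    module
  have hint₁ : CircleIntegrable (fun μ => (μ - ν)⁻¹ • (z - μ)⁻¹ • R μ y) c r :=
    (hνμ.smul hRy).circleIntegrable hr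
  have hint₂ : CircleIntegrable (fun μ => ((z - μ)⁻¹ * (μ - ν)⁻¹) • T y) c r :=
    (((continuousOn_inv_sub_of_mem_ball hz).mul hνμ).smul continuousOn_const).circleIntegrable hr
  rw [reducedResolvent_apply hRc hz, T.map_smul, ← T.circleIntegral_comp_comm
    (hRy.circleIntegrable hr), circleIntegral.integral_congr hr hpt,
    circleIntegral.integral_sub hint₁ hint₂,
    circleIntegral.integral_smul_const, circleIntegral_inv_sub_mul_sub_inv_of_mem_ball hz hν hzν,
    zero_smul, sub_zero]

theorem rieszProjection_apply_reducedResolvent_eq_zero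
    (hR : ∀ μ ∈ sphere c r, A.IsResolventAt μ (R μ))
    (hRc : ContinuousOn R (sphere c r)) (hz : z ∈ ball c r) (y : H) :
    rieszProjection R c r (reducedResolvent R c r z y) = 0 := by
  have hr : 0 ≤ r := (dist_nonneg.trans_lt hz).le
  obtain ⟨ρ, hρ, hρr, hzρ, hannulus⟩ := exists_closedBall_sdiff_ball_subset
    LinearPMap.isOpen_resolventSet (fun μ hμ => ⟨R μ, hR μ hμ⟩) hz
  have hsphere : sphere c ρ ⊆ A.resolventSet := fun ν hν => hannulus
    ⟨sphere_subset_closedBall.trans (closedBall_subset_closedBall hρr.le) hν,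
      fun h => sphere_disjoint_ball.ne_of_mem hν h rfl⟩
  have hP : rieszProjection R c r = -(2 * π * I)⁻¹ • ∮ ν in C(c, ρ), A.resolvent ν := by
    rw [rieszProjection_eq_circleIntegral, circleIntegral.integral_congr hr
      fun μ hμ => (hR μ hμ).resolvent_eq.symm,
      LinearPMap.circleIntegral_resolvent_eq_of_annulus_subset hρ hρr.le hannulus]
  have hcont : ContinuousOn A.resolvent (sphere c ρ) := fun ν hν =>
    (LinearPMap.differentiableAt_resolvent (hsphere hν)).continuousAt.continuousWithinAt
  rw [hP, smul_apply, ContinuousLinearMap.circleIntegral_apply (hcont.circleIntegrable hρ.le),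
    circleIntegral.integral_congr hρ.le fun ν hν =>
      (LinearPMap.isResolventAt_resolvent (hsphere hν)).apply_reducedResolvent hR hRc hz
        (sphere_subset_ball hρr hν) (sphere_disjoint_ball.ne_of_mem hν hzρ).symm y,
    circleIntegral.integral_smul, circleIntegral_circleIntegral_sub_inv_smul_eq_zero hρ.le hρr
      ((hRc.clm_apply continuousOn_const).inv_sub_smul hz), smul_zero, smul_zero]

end Riesz

theorem reduced_resolvent_inverse_general {H : Type*} [NormedAddCommGroup H]
    [InnerProductSpace ℂ H] [CompleteSpace H]
    (A : H →ₗ.[ℂ] H) (hclosed : IsClosed (A.graph : Set (H × H)))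
    (lam : ℂ) (r : ℝ)
    (R : ℂ → H →L[ℂ] H)
    (hRcont : ContinuousOn R (Metric.sphere lam r))
    (hRmem : ∀ μ ∈ Metric.sphere lam r, ∀ y : H, R μ y ∈ A.domain)
    (hRinv : ∀ μ ∈ Metric.sphere lam r, ∀ (y : H) (h : R μ y ∈ A.domain),
        A ⟨R μ y, h⟩ - μ • R μ y = y)
    (hRinv' : ∀ μ ∈ Metric.sphere lam r, ∀ (x : H) (hx : x ∈ A.domain),
        R μ (A ⟨x, hx⟩ - μ • x) = x)
    (z : ℂ) (hz : ‖z - lam‖ < r) :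
    (∀ y : H, reducedResolvent R lam r z y ∈ A.domain) ∧
    (∀ (y : H) (h : reducedResolvent R lam r z y ∈ A.domain),
        A ⟨reducedResolvent R lam r z y, h⟩ - z • reducedResolvent R lam r z y =
          y - rieszProjection R lam r y) ∧
    (∀ (x : H) (hx : x ∈ A.domain),
        reducedResolvent R lam r z (A ⟨x, hx⟩ - z • x) = x - rieszProjection R lam r x) ∧
    (∀ y : H, reducedResolvent R lam r z (rieszProjection R lam r y) = 0 ∧
        rieszProjection R lam r (reducedResolvent R lam r z y) = 0) := by
  have hR : ∀ μ ∈ sphere lam r, A.IsResolventAt μ (R μ) :=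
    fun μ hμ => ⟨hRmem μ hμ, hRinv μ hμ, hRinv' μ hμ⟩
  have hzb : z ∈ ball lam r := mem_ball_iff_norm.2 hz
  have hright := exists_sub_smul_reducedResolvent_eq hclosed hR hRcont hzb
  have hleft := reducedResolvent_apply_sub_smul hR hRcont hzb
  have hPR := rieszProjection_apply_reducedResolvent_eq_zero hR hRcont hzb
  refine ⟨fun y => (hright y).1, fun y _ => (hright y).2, hleft, fun y => ⟨?_, hPR y⟩⟩
  obtain ⟨hmem, heq⟩ := hright y
  have h := hleft _ hmem
  rw [heq, map_sub, sub_right_inj] at h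
  rw [h, hPR]

/-- Let `A` be a closed operator with the circle `{|μ-λ| = r}` in its resolvent set, `P` the
associated Riesz projection and `P̄ = 1 - P`.  For `|z-λ| < r`, the operator `A - z`
restricted to `Ran P̄ ∩ D(A)` is invertible with inverse (composed with `P̄`) given by the
reduced resolvent `R̂_z`: one has `(A-z) R̂_z = P̄`, `R̂_z (A-z) ⊆ P̄`, and
`R̂_z P = P R̂_z = 0`. -/
theorem reduced_resolvent_inverse {H : Type*} [NormedAddCommGroup H]
    [InnerProductSpace ℂ H] [CompleteSpace H]
    (A : H →ₗ.[ℂ] H) (hclosed : IsClosed (A.graph : Set (H × H)))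
    (lam : ℂ) (r : ℝ) (hr : 0 < r)
    (R : ℂ → H →L[ℂ] H)
    (hRcont : ContinuousOn R (Metric.sphere lam r))
    (hRmem : ∀ μ ∈ Metric.sphere lam r, ∀ y : H, R μ y ∈ A.domain)
    (hRinv : ∀ μ ∈ Metric.sphere lam r, ∀ (y : H) (h : R μ y ∈ A.domain),
        A ⟨R μ y, h⟩ - μ • R μ y = y)
    (hRinv' : ∀ μ ∈ Metric.sphere lam r, ∀ (x : H) (hx : x ∈ A.domain),
        R μ (A ⟨x, hx⟩ - μ • x) = x)
    (z : ℂ) (hz : ‖z - lam‖ < r) :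
    (∀ y : H, reducedResolvent R lam r z y ∈ A.domain) ∧
    (∀ (y : H) (h : reducedResolvent R lam r z y ∈ A.domain),
        A ⟨reducedResolvent R lam r z y, h⟩ - z • reducedResolvent R lam r z y =
          y - rieszProjection R lam r y) ∧
    (∀ (x : H) (hx : x ∈ A.domain),
        reducedResolvent R lam r z (A ⟨x, hx⟩ - z • x) = x - rieszProjection R lam r x) ∧
    (∀ y : H, reducedResolvent R lam r z (rieszProjection R lam r y) = 0 ∧
        rieszProjection R lam r (reducedResolvent R lam r z y) = 0) :=
  reduced_resolvent_inverse_general A hclosed lam r R hRcont hRmem hRinv hRinv' z hz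
end

section
/- Let (H, T) be a Feshbach pair for χ. Then the maps χ : ker H → ker F_χ(H,T) and Q_χ : ker F_χ(H,T) → ker H, where Q_χ = χ − χ̄ H_χ̄⁻¹ χ̄ W χ, are linear isomorphisms inverse to each other. In particular, H has nontrivial kernel if and only if F_χ(H,T) does. -/
/-- The Feshbach operator
`F_χ(H,T) = T + χWχ - χWχ̄ ((T + χ̄Wχ̄)|_{Ran χ̄})⁻¹ χ̄Wχ`, with `W = H - T`, expressed
through the bounded operator `G = ((T + χ̄Wχ̄)|_{Ran χ̄})⁻¹ ∘ χ̄`. -/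
noncomputable def feshbachOp {E : Type*} [NormedAddCommGroup E] [InnerProductSpace ℂ E]
    (χ χb : E →L[ℂ] E) (D : Submodule ℂ E) (H T : ↥D →ₗ[ℂ] E)
    (hχD : ∀ x : ↥D, χ (x : E) ∈ D) (hχbD : ∀ x : ↥D, χb (x : E) ∈ D)
    (G : E →L[ℂ] E) (hGD : ∀ y : E, G y ∈ D) (x : ↥D) : E :=
  T x + χ ((H - T) ⟨χ (x : E), hχD x⟩) -
    χ ((H - T) ⟨χb (G ((H - T) ⟨χ (x : E), hχD x⟩)),
        hχbD ⟨G ((H - T) ⟨χ (x : E), hχD x⟩), hGD ((H - T) ⟨χ (x : E), hχD x⟩)⟩⟩)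

/-- The auxiliary operator `Q_χ = χ - χ̄ ((T + χ̄Wχ̄)|_{Ran χ̄})⁻¹ χ̄Wχ`. -/
noncomputable def feshbachQ {E : Type*} [NormedAddCommGroup E] [InnerProductSpace ℂ E]
    (χ χb : E →L[ℂ] E) (D : Submodule ℂ E) (H T : ↥D →ₗ[ℂ] E)
    (hχD : ∀ x : ↥D, χ (x : E) ∈ D)
    (G : E →L[ℂ] E) (x : ↥D) : E :=
  χ (x : E) - χb (G ((H - T) ⟨χ (x : E), hχD x⟩))

section FeshbachAux

variable {E : Type*} [NormedAddCommGroup E] [InnerProductSpace ℂ E]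

/-- Lift of an operator preserving `D` to a map `D → D`. -/
def dLift (χ : E →L[ℂ] E) (D : Submodule ℂ E) (h : ∀ x : ↥D, χ (x : E) ∈ D) (x : ↥D) : ↥D :=
  ⟨χ (x : E), h x⟩

/-- Lift of an operator with range in `D` to a map `E → D`. -/
def eLift (G : E →L[ℂ] E) (D : Submodule ℂ E) (h : ∀ y : E, G y ∈ D) (y : E) : ↥D :=
  ⟨G y, h y⟩

@[simp] lemma dLift_coe (χ : E →L[ℂ] E) (D : Submodule ℂ E) (h : ∀ x : ↥D, χ (x : E) ∈ D)
    (x : ↥D) : ((dLift χ D h x : ↥D) : E) = χ (x : E) := rfl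

@[simp] lemma eLift_coe (G : E →L[ℂ] E) (D : Submodule ℂ E) (h : ∀ y : E, G y ∈ D)
    (y : E) : ((eLift G D h y : ↥D) : E) = G y := rfl

lemma dLift_add (χ : E →L[ℂ] E) (D : Submodule ℂ E) (h : ∀ x : ↥D, χ (x : E) ∈ D)
    (a b : ↥D) : dLift χ D h (a + b) = dLift χ D h a + dLift χ D h b :=
  Subtype.ext (by simp)

lemma dLift_sub (χ : E →L[ℂ] E) (D : Submodule ℂ E) (h : ∀ x : ↥D, χ (x : E) ∈ D)
    (a b : ↥D) : dLift χ D h (a - b) = dLift χ D h a - dLift χ D h b :=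
  Subtype.ext (by simp)

end FeshbachAux

/-- For a Feshbach pair `(H, T)` for `χ`, the maps `χ : ker H → ker F_χ(H,T)` and
`Q_χ : ker F_χ(H,T) → ker H` are (linear) isomorphisms inverse to each other; in particular
`H` has nontrivial kernel iff `F_χ(H,T)` does. -/
theorem feshbach_kernel_isospectrality {E : Type*} [NormedAddCommGroup E]
    [InnerProductSpace ℂ E] [CompleteSpace E]
    (χ χb : E →L[ℂ] E)
    (hcomm : ∀ x : E, χ (χb x) = χb (χ x))
    (hsum : ∀ x : E, χ (χ x) + χb (χb x) = x)
    (D : Submodule ℂ E) (H T : ↥D →ₗ[ℂ] E)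
    (hHcl : IsClosed {p : E × E | ∃ x : ↥D, (x : E) = p.1 ∧ H x = p.2})
    (hTcl : IsClosed {p : E × E | ∃ x : ↥D, (x : E) = p.1 ∧ T x = p.2})
    (hχD : ∀ x : ↥D, χ (x : E) ∈ D) (hχbD : ∀ x : ↥D, χb (x : E) ∈ D)
    (hTχ : ∀ (x : ↥D), T ⟨χ (x : E), hχD x⟩ = χ (T x))
    (hTχb : ∀ (x : ↥D), T ⟨χb (x : E), hχbD x⟩ = χb (T x))
    (G₀ : E →L[ℂ] E) (hG₀D : ∀ y : E, G₀ y ∈ D)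
    (hG₀r : ∀ (y : E) (h : G₀ y ∈ D), T ⟨G₀ y, h⟩ = χb y)
    (hG₀l : ∀ x : ↥D, (x : E) ∈ Set.range χb → G₀ (T x) = (x : E))
    (G : E →L[ℂ] E) (hGD : ∀ y : E, G y ∈ D)
    (hGr : ∀ (y : E) (h1 : G y ∈ D) (h2 : χb (G y) ∈ D),
        T ⟨G y, h1⟩ + χb ((H - T) ⟨χb (G y), h2⟩) = χb y)
    (hGl : ∀ x : ↥D, (x : E) ∈ Set.range χb →
        G (T x + χb ((H - T) ⟨χb (x : E), hχbD x⟩)) = (x : E)) :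
    (∀ x : ↥D, H x = 0 → feshbachOp χ χb D H T hχD hχbD G hGD ⟨χ (x : E), hχD x⟩ = 0) ∧
    (∀ x : ↥D, feshbachOp χ χb D H T hχD hχbD G hGD x = 0 →
        ∃ h : feshbachQ χ χb D H T hχD G x ∈ D, H ⟨feshbachQ χ χb D H T hχD G x, h⟩ = 0) ∧
    (∀ x : ↥D, H x = 0 → feshbachQ χ χb D H T hχD G ⟨χ (x : E), hχD x⟩ = (x : E)) ∧
    (∀ x : ↥D, feshbachOp χ χb D H T hχD hχbD G hGD x = 0 →
        χ (feshbachQ χ χb D H T hχD G x) = (x : E)) ∧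
    ((∃ x : ↥D, (x : E) ≠ 0 ∧ H x = 0) ↔
      (∃ x : ↥D, (x : E) ≠ 0 ∧ feshbachOp χ χb D H T hχD hχbD G hGD x = 0)) := by
  -- restated hypotheses through the lifts
  have hTχ' : ∀ x : ↥D, T (dLift χ D hχD x) = χ (T x) := hTχ
  have hTχb' : ∀ x : ↥D, T (dLift χb D hχbD x) = χb (T x) := hTχb
  have hG₀r' : ∀ y : E, T (eLift G₀ D hG₀D y) = χb y := fun y => hG₀r y (hG₀D y)
  have hGr' : ∀ y : E,
      T (eLift G D hGD y) + χb ((H - T) (dLift χb D hχbD (eLift G D hGD y))) = χb y :=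
    fun y => hGr y (hGD y) (hχbD (eLift G D hGD y))
  have hGl' : ∀ x : ↥D, (x : E) ∈ Set.range χb →
      G (T x + χb ((H - T) (dLift χb D hχbD x))) = (x : E) := hGl
  have hFeq : ∀ x : ↥D, feshbachOp χ χb D H T hχD hχbD G hGD x
      = T x + χ ((H - T) (dLift χ D hχD x))
        - χ ((H - T) (dLift χb D hχbD (eLift G D hGD ((H - T) (dLift χ D hχD x))))) :=
    fun _ => rfl
  have hQeq : ∀ x : ↥D, feshbachQ χ χb D H T hχD G x
      = χ (x : E) - χb (G ((H - T) (dLift χ D hχD x))) := fun _ => rfl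
  -- L1 : χb fixes T x for x in Ran χb
  have L1 : ∀ x : ↥D, (x : E) ∈ Set.range χb → χb (T x) = T x := by
    intro x hx
    have h1 : G₀ (T x) = (x : E) := hG₀l x hx
    have h2 : T (eLift G₀ D hG₀D (T x)) = χb (T x) := hG₀r' (T x)
    have h3 : eLift G₀ D hG₀D (T x) = x := Subtype.ext h1
    rw [h3] at h2
    exact h2.symm
  -- LB : kernel of T has trivial χb part
  have LB : ∀ v : ↥D, T v = 0 → χb (v : E) = 0 := by
    intro v hv
    have h1 : G₀ (T (dLift χb D hχbD v)) = χb (v : E) := hG₀l _ ⟨(v : E), rfl⟩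
    rw [hTχb' v, hv] at h1
    simpa using h1.symm
  -- L3 : χb fixes H_χb x for x in Ran χb
  have L3 : ∀ x : ↥D, (x : E) ∈ Set.range χb →
      χb (T x + χb ((H - T) (dLift χb D hχbD x)))
        = T x + χb ((H - T) (dLift χb D hχbD x)) := by
    intro x hx
    have h1 : G (T x + χb ((H - T) (dLift χb D hχbD x))) = (x : E) := hGl' x hx
    have h2 := hGr' (T x + χb ((H - T) (dLift χb D hχbD x)))
    have h3 : eLift G D hGD (T x + χb ((H - T) (dLift χb D hχbD x))) = x := Subtype.ext h1
    rw [h3] at h2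
    exact h2.symm
  -- L4
  have L4 : ∀ x : ↥D, (x : E) ∈ Set.range χb →
      χb (χb ((H - T) (dLift χb D hχbD x))) = χb ((H - T) (dLift χb D hχbD x)) := by
    intro x hx
    have h1 := L3 x hx
    rw [map_add, L1 x hx] at h1
    exact add_left_cancel h1
  -- LA : kernel of H_χb has trivial χb part
  have LA : ∀ v : ↥D, T v + χb ((H - T) (dLift χb D hχbD v)) = 0 → χb (v : E) = 0 := by
    intro v hv
    have htmem : ((dLift χb D hχbD v : ↥D) : E) ∈ Set.range χb := ⟨(v : E), rfl⟩
    -- apply χb to the hypothesis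
    have hstar : T (dLift χb D hχbD v)
        + χb (χb ((H - T) (dLift χb D hχbD v))) = 0 := by
      have h := congrArg χb hv
      rw [map_add, map_zero, ← hTχb' v] at h
      exact h
    -- the element t - χb t is killed by T and lies in Ran χb, hence vanishes
    have hTn : T (dLift χb D hχbD v - dLift χb D hχbD (dLift χb D hχbD v)) = 0 := by
      rw [map_sub, hTχb' (dLift χb D hχbD v), L1 _ htmem, sub_self]
    have hnmem : ((dLift χb D hχbD v - dLift χb D hχbD (dLift χb D hχbD v) : ↥D) : E)
        ∈ Set.range χb := by
      refine ⟨(v : E) - χb (v : E), ?_⟩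
      simp [map_sub]
    have hn0 : ((dLift χb D hχbD v - dLift χb D hχbD (dLift χb D hχbD v) : ↥D) : E) = 0 := by
      have h1 := hG₀l _ hnmem
      rw [hTn] at h1
      simpa using h1.symm
    have htfix : dLift χb D hχbD (dLift χb D hχbD v) = dLift χb D hχbD v := by
      apply Subtype.ext
      have h1 : ((dLift χb D hχbD v : ↥D) : E)
          - ((dLift χb D hχbD (dLift χb D hχbD v) : ↥D) : E) = 0 := by
        rw [← Submodule.coe_sub]; exact hn0
      have := sub_eq_zero.mp h1
      exact this.symm
    -- conclude : H_χb t = 0, hence t = 0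
    have hstar2 : T (dLift χb D hχbD v)
        + χb ((H - T) (dLift χb D hχbD (dLift χb D hχbD v))) = 0 := by
      rw [htfix]
      have h4 := L4 (dLift χb D hχbD v) htmem
      rw [htfix] at h4
      rw [← h4]
      exact hstar
    have h5 := hGl' (dLift χb D hχbD v) htmem
    rw [hstar2] at h5
    simpa using h5.symm
  -- generic identity from hsum
  have hχχ : ∀ z : E, z - χb (χb z) = χ (χ z) := fun z => (eq_sub_of_add_eq (hsum z)).symm
  have hGr2 : ∀ y : E, T (eLift G D hGD y)
      = χb y - χb ((H - T) (dLift χb D hχbD (eLift G D hGD y))) :=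
    fun y => eq_sub_of_add_eq (hGr' y)
  -- the key vanishing used in parts (1) and (3)
  have key : ∀ x : ↥D, H x = 0 →
      χb ((dLift χb D hχbD x
        + eLift G D hGD ((H - T) (dLift χ D hχD (dLift χ D hχD x))) : ↥D) : E) = 0 := by
    intro x hx
    set w2 : E := (H - T) (dLift χ D hχD (dLift χ D hχD x)) with hw2
    set v : ↥D := dLift χb D hχbD x + eLift G D hGD w2 with hvdef
    have hdec : dLift χ D hχD (dLift χ D hχD x) + dLift χb D hχbD (dLift χb D hχbD x) = x :=
      Subtype.ext (by simpa using hsum (x : E))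
    have hWx : (H - T) x = w2 + (H - T) (dLift χb D hχbD (dLift χb D hχbD x)) := by
      conv_lhs => rw [← hdec]
      rw [map_add, hw2]
    have hTx : T x = -((H - T) x) := by
      rw [LinearMap.sub_apply, hx, zero_sub, neg_neg]
    have hvb : dLift χb D hχbD v
        = dLift χb D hχbD (dLift χb D hχbD x) + dLift χb D hχbD (eLift G D hGD w2) :=
      dLift_add χb D hχbD _ _
    apply LA
    have e1 : T v = χb (T x) + T (eLift G D hGD w2) := by
      rw [hvdef, map_add, hTχb' x]
    have e2 : χb ((H - T) (dLift χb D hχbD v))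
        = χb ((H - T) (dLift χb D hχbD (dLift χb D hχbD x)))
          + χb ((H - T) (dLift χb D hχbD (eLift G D hGD w2))) := by
      rw [hvb, map_add, map_add]
    have e3 : χb (T x) = -χb w2 - χb ((H - T) (dLift χb D hχbD (dLift χb D hχbD x))) := by
      rw [hTx, hWx, map_neg, map_add]
      abel
    rw [e1, e2, e3, hGr2 w2]
    abel
  -- part (1)
  have part1 : ∀ x : ↥D, H x = 0 →
      feshbachOp χ χb D H T hχD hχbD G hGD ⟨χ (x : E), hχD x⟩ = 0 := by
    intro x hx
    have hkey := key x hx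
    set w2 : E := (H - T) (dLift χ D hχD (dLift χ D hχD x)) with hw2
    have hv0 : (dLift χb D hχbD (dLift χb D hχbD x + eLift G D hGD w2) : ↥D) = 0 :=
      Subtype.ext (by simpa using hkey)
    have hdec : dLift χ D hχD (dLift χ D hχD x) + dLift χb D hχbD (dLift χb D hχbD x) = x :=
      Subtype.ext (by simpa using hsum (x : E))
    have hWx : (H - T) x = w2 + (H - T) (dLift χb D hχbD (dLift χb D hχbD x)) := by
      conv_lhs => rw [← hdec]
      rw [map_add, hw2]
    have hTx : T x = -((H - T) x) := by
      rw [LinearMap.sub_apply, hx, zero_sub, neg_neg]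
    have hvb : dLift χb D hχbD (dLift χb D hχbD x + eLift G D hGD w2)
        = dLift χb D hχbD (dLift χb D hχbD x) + dLift χb D hχbD (eLift G D hGD w2) :=
      dLift_add χb D hχbD _ _
    have hsplit : (H - T) (dLift χb D hχbD (dLift χb D hχbD x))
        + (H - T) (dLift χb D hχbD (eLift G D hGD w2)) = 0 := by
      rw [← map_add, ← hvb, hv0, map_zero]
    show feshbachOp χ χb D H T hχD hχbD G hGD (dLift χ D hχD x) = 0
    rw [hFeq (dLift χ D hχD x), hTχ' x, hTx, hWx]
    have h6 : χ (-(w2 + (H - T) (dLift χb D hχbD (dLift χb D hχbD x))))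
        = -χ w2 - χ ((H - T) (dLift χb D hχbD (dLift χb D hχbD x))) := by
      rw [map_neg, map_add]; abel
    rw [h6]
    have hfin : χ ((H - T) (dLift χb D hχbD (dLift χb D hχbD x)))
        + χ ((H - T) (dLift χb D hχbD (eLift G D hGD w2))) = 0 := by
      rw [← map_add, hsplit, map_zero]
    have h7 := eq_neg_of_add_eq_zero_right hfin
    rw [h7]
    abel
  -- part (3)
  have part3 : ∀ x : ↥D, H x = 0 →
      feshbachQ χ χb D H T hχD G ⟨χ (x : E), hχD x⟩ = (x : E) := by
    intro x hx
    have hkey := key x hx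
    set w2 : E := (H - T) (dLift χ D hχD (dLift χ D hχD x)) with hw2
    have hkey' : χb (χb (x : E)) + χb (G w2) = 0 := by
      have h8 : ((dLift χb D hχbD x + eLift G D hGD w2 : ↥D) : E) = χb (x : E) + G w2 := by
        simp
      rw [h8, map_add] at hkey
      exact hkey
    show feshbachQ χ χb D H T hχD G (dLift χ D hχD x) = (x : E)
    rw [hQeq (dLift χ D hχD x)]
    have hGw : χb (G ((H - T) (dLift χ D hχD (dLift χ D hχD x)))) = -χb (χb (x : E)) := by
      rw [← hw2]
      exact eq_neg_of_add_eq_zero_right hkey'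
    rw [dLift_coe, hGw, sub_neg_eq_add, hsum]
  -- part (2)
  have part2 : ∀ x : ↥D, feshbachOp χ χb D H T hχD hχbD G hGD x = 0 →
      ∃ h : feshbachQ χ χb D H T hχD G x ∈ D, H ⟨feshbachQ χ χb D H T hχD G x, h⟩ = 0 := by
    intro x hFx
    set w1 : E := (H - T) (dLift χ D hχD x) with hw1
    refine ⟨D.sub_mem (hχD x) (hχbD (eLift G D hGD w1)), ?_⟩
    have hqeq : (⟨feshbachQ χ χb D H T hχD G x,
        D.sub_mem (hχD x) (hχbD (eLift G D hGD w1))⟩ : ↥D)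
        = dLift χ D hχD x - dLift χb D hχbD (eLift G D hGD w1) :=
      Subtype.ext (by
        show feshbachQ χ χb D H T hχD G x = _
        rw [hQeq x]; simp [hw1])
    rw [hqeq]
    set z : E := (H - T) (dLift χb D hχbD (eLift G D hGD w1)) with hz
    have a1 : (H - T) (dLift χ D hχD x - dLift χb D hχbD (eLift G D hGD w1)) = w1 - z := by
      rw [map_sub, hw1, hz]
    have a2 : T (dLift χ D hχD x - dLift χb D hχbD (eLift G D hGD w1))
        = χ (T x) - (χb (χb w1) - χb (χb z)) := by
      rw [map_sub, hTχ' x, hTχb' (eLift G D hGD w1), hGr2 w1, map_sub, hz]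
    have hHsplit : H (dLift χ D hχD x - dLift χb D hχbD (eLift G D hGD w1))
        = (H - T) (dLift χ D hχD x - dLift χb D hχbD (eLift G D hGD w1))
          + T (dLift χ D hχD x - dLift χb D hχbD (eLift G D hGD w1)) := by
      rw [LinearMap.sub_apply]; abel
    rw [hHsplit, a1, a2]
    have h9 : w1 - z + (χ (T x) - (χb (χb w1) - χb (χb z)))
        = χ (T x) + (w1 - χb (χb w1)) - (z - χb (χb z)) := by abel
    rw [h9, hχχ w1, hχχ z]
    have hF0 : T x + χ w1 - χ z = 0 := by
      rw [hz, hw1, ← hFeq x]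
      exact hFx
    have hfin := congrArg χ hF0
    rw [map_sub, map_add, map_zero] at hfin
    exact hfin
  -- part (4)
  have part4 : ∀ x : ↥D, feshbachOp χ χb D H T hχD hχbD G hGD x = 0 →
      χ (feshbachQ χ χb D H T hχD G x) = (x : E) := by
    intro x hFx
    set w1 : E := (H - T) (dLift χ D hχD x) with hw1
    set z : E := (H - T) (dLift χb D hχbD (eLift G D hGD w1)) with hz
    have hF0 : T x + χ w1 - χ z = 0 := by
      rw [hz, hw1, ← hFeq x]
      exact hFx
    have hTx : T x = χ z - χ w1 := eq_sub_of_add_eq (sub_eq_zero.mp hF0)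
    have b1 : T (dLift χb D hχbD x + dLift χ D hχD (eLift G D hGD w1)) = 0 := by
      rw [map_add, hTχb' x, hTχ' (eLift G D hGD w1), hGr2 w1, ← hz, hTx]
      rw [map_sub, map_sub, hcomm w1, hcomm z]
      abel
    have b2 := LB _ b1
    have b3 : χb (χb (x : E)) + χb (χ (G w1)) = 0 := by
      have hcoe : ((dLift χb D hχbD x + dLift χ D hχD (eLift G D hGD w1) : ↥D) : E)
          = χb (x : E) + χ (G w1) := by simp
      rw [hcoe, map_add] at b2
      exact b2
    rw [hQeq x, map_sub, hcomm (G ((H - T) (dLift χ D hχD x)))]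
    have b4 : χb (χ (G ((H - T) (dLift χ D hχD x)))) = -χb (χb (x : E)) := by
      rw [← hw1]
      exact eq_neg_of_add_eq_zero_right b3
    rw [b4, sub_neg_eq_add, hsum]
  refine ⟨part1, part2, part3, part4, ?_⟩
  constructor
  · rintro ⟨x, hx0, hx⟩
    refine ⟨⟨χ (x : E), hχD x⟩, ?_, part1 x hx⟩
    intro hc
    have hc' : χ (x : E) = 0 := hc
    have h3 : feshbachQ χ χb D H T hχD G (dLift χ D hχD x) = (x : E) := part3 x hx
    have hz0 : dLift χ D hχD x = 0 := Subtype.ext (by simpa using hc')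
    rw [hz0] at h3
    have hq0 : feshbachQ χ χb D H T hχD G (0 : ↥D) = 0 := by
      rw [hQeq 0]
      have hd0 : dLift χ D hχD (0 : ↥D) = 0 := Subtype.ext (by simp)
      rw [hd0]
      simp
    rw [hq0] at h3
    exact hx0 h3.symm
  · rintro ⟨x, hx0, hFx⟩
    obtain ⟨hmem, hH⟩ := part2 x hFx
    refine ⟨⟨feshbachQ χ χb D H T hχD G x, hmem⟩, ?_, hH⟩
    intro hc
    have hc' : feshbachQ χ χb D H T hχD G x = 0 := hc
    have h4 := part4 x hFx
    rw [hc', map_zero] at h4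
    exact hx0 h4.symm
end

section
/- Let (H, T) be a Feshbach pair for χ, and let Y be a subspace with Ran χ ⊆ Y ⊆ H such that T maps D(T) ∩ Y into Y and χ̄T⁻¹χ̄ Y ⊆ Y. Then H : D(H) → H is boundedly invertible if and only if F_χ(H,T) : D(T) ∩ Y → Y is boundedly invertible in Y, and in that case H⁻¹ = Q_χ F_χ(H,T)⁻¹ Q_χ^# + χ̄ H_χ̄⁻¹ χ̄, where Q_χ = χ − χ̄H_χ̄⁻¹χ̄Wχ and Q_χ^# = χ − χWχ̄H_χ̄⁻¹χ̄. -/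
/-- The auxiliary operator `Q_χ^# = χ - χWχ̄ H_χ̄⁻¹ χ̄`. -/
noncomputable def feshbachQsharp {E : Type*} [NormedAddCommGroup E] [InnerProductSpace ℂ E]
    (χ χb : E →L[ℂ] E) (D : Submodule ℂ E) (H T : ↥D →ₗ[ℂ] E)
    (hχbD : ∀ x : ↥D, χb (x : E) ∈ D)
    (G : E →L[ℂ] E) (hGD : ∀ y : E, G y ∈ D) (y : E) : E :=
  χ y - χ ((H - T) ⟨χb (G y), hχbD ⟨G y, hGD y⟩⟩)

/-- Isospectrality of the smooth Feshbach map: let `(H, T)` be a Feshbach pair for `χ` and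
let `Y` be a subspace with `Ran χ ⊆ Y` such that `T (D ∩ Y) ⊆ Y` and `χ̄T⁻¹χ̄ Y ⊆ Y`.
Then `H` is boundedly invertible iff `F_χ(H,T)` is boundedly invertible in `Y`, and in
that case `H⁻¹ = Q_χ F_χ(H,T)⁻¹ Q_χ^# + χ̄ H_χ̄⁻¹ χ̄`. -/
theorem feshbach_isospectrality {E : Type*} [NormedAddCommGroup E]
    [InnerProductSpace ℂ E] [CompleteSpace E]
    (χ χb : E →L[ℂ] E)
    (hcomm : ∀ x : E, χ (χb x) = χb (χ x))
    (hsum : ∀ x : E, χ (χ x) + χb (χb x) = x)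
    (D : Submodule ℂ E) (H T : ↥D →ₗ[ℂ] E)
    (hHcl : IsClosed {p : E × E | ∃ x : ↥D, (x : E) = p.1 ∧ H x = p.2})
    (hTcl : IsClosed {p : E × E | ∃ x : ↥D, (x : E) = p.1 ∧ T x = p.2})
    (hχD : ∀ x : ↥D, χ (x : E) ∈ D) (hχbD : ∀ x : ↥D, χb (x : E) ∈ D)
    (hTχ : ∀ (x : ↥D), T ⟨χ (x : E), hχD x⟩ = χ (T x))
    (hTχb : ∀ (x : ↥D), T ⟨χb (x : E), hχbD x⟩ = χb (T x))
    (G₀ : E →L[ℂ] E) (hG₀D : ∀ y : E, G₀ y ∈ D)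
    (hG₀r : ∀ (y : E) (h : G₀ y ∈ D), T ⟨G₀ y, h⟩ = χb y)
    (hG₀l : ∀ x : ↥D, (x : E) ∈ Set.range χb → G₀ (T x) = (x : E))
    (G : E →L[ℂ] E) (hGD : ∀ y : E, G y ∈ D)
    (hGr : ∀ (y : E) (h1 : G y ∈ D) (h2 : χb (G y) ∈ D),
        T ⟨G y, h1⟩ + χb ((H - T) ⟨χb (G y), h2⟩) = χb y)
    (hGl : ∀ x : ↥D, (x : E) ∈ Set.range χb →
        G (T x + χb ((H - T) ⟨χb (x : E), hχbD x⟩)) = (x : E))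
    -- the subspace `Y`
    (Y : Submodule ℂ E)
    (hχY : ∀ y : E, χ y ∈ Y)
    (hTY : ∀ x : ↥D, (x : E) ∈ Y → T x ∈ Y)
    (hresY : ∀ y ∈ Y, χb (G₀ y) ∈ Y) :
    ((∃ Hinv : E →L[ℂ] E, (∀ y : E, Hinv y ∈ D) ∧
        (∀ (y : E) (h : Hinv y ∈ D), H ⟨Hinv y, h⟩ = y) ∧
        (∀ x : ↥D, Hinv (H x) = (x : E))) ↔
      (∃ Finv : E →L[ℂ] E, (∀ y ∈ Y, Finv y ∈ D ∧ Finv y ∈ Y) ∧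
        (∀ (y : E), y ∈ Y → ∀ (h : Finv y ∈ D),
          feshbachOp χ χb D H T hχD hχbD G hGD ⟨Finv y, h⟩ = y) ∧
        (∀ x : ↥D, (x : E) ∈ Y →
          Finv (feshbachOp χ χb D H T hχD hχbD G hGD x) = (x : E)))) ∧
    (∀ Hinv Finv : E →L[ℂ] E,
      ((∀ y : E, Hinv y ∈ D) ∧
        (∀ (y : E) (h : Hinv y ∈ D), H ⟨Hinv y, h⟩ = y) ∧
        (∀ x : ↥D, Hinv (H x) = (x : E))) →
      ((∀ y ∈ Y, Finv y ∈ D ∧ Finv y ∈ Y) ∧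
        (∀ (y : E), y ∈ Y → ∀ (h : Finv y ∈ D),
          feshbachOp χ χb D H T hχD hχbD G hGD ⟨Finv y, h⟩ = y) ∧
        (∀ x : ↥D, (x : E) ∈ Y →
          Finv (feshbachOp χ χb D H T hχD hχbD G hGD x) = (x : E))) →
      ∀ (y : E) (h : Finv (feshbachQsharp χ χb D H T hχbD G hGD y) ∈ D),
        Hinv y = feshbachQ χ χb D H T hχD G
            ⟨Finv (feshbachQsharp χ χb D H T hχbD G hGD y), h⟩ + χb (G y)) := by
  classical
  -- ## Generic helpers
  have hHapp : ∀ x : ↥D, H x = T x + (H - T) x := fun x => by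
    simp [LinearMap.sub_apply]
  have hsplit : ∀ x : ↥D, x =
      (⟨χ (χ (x : E)), hχD ⟨χ (x : E), hχD x⟩⟩ : ↥D) +
        ⟨χb (χb (x : E)), hχbD ⟨χb (x : E), hχbD x⟩⟩ := fun x =>
    Subtype.ext (by simp only [Submodule.coe_add]; exact (hsum _).symm)
  -- ## Step 1 : `T s = 0 → χb s = 0`
  have hkerT : ∀ s : ↥D, T s = 0 → χb (s : E) = 0 := by
    intro s hs
    have h1 : T (⟨χb (s : E), hχbD s⟩ : ↥D) = 0 := by rw [hTχb s, hs, map_zero]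
    have h2 := hG₀l ⟨χb (s : E), hχbD s⟩ ⟨(s : E), rfl⟩
    rw [h1, map_zero] at h2
    exact h2.symm
  -- ## Step 2 : determination of `χb (G₀ w)`
  have hdet₀ : ∀ (w : E) (z : ↥D), T z = χb w → χb (G₀ w) = χb (z : E) := by
    intro w z hz
    have hTs : T ((⟨G₀ w, hG₀D w⟩ : ↥D) - z) = 0 := by
      rw [map_sub, hG₀r w (hG₀D w), hz, sub_self]
    have h0 := hkerT _ hTs
    rw [Submodule.coe_sub, map_sub, sub_eq_zero] at h0
    exact h0
  -- ## Step 3 : `χb` fixes `T z` for `z` in the range of `χb`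
  have ht2 : ∀ z : ↥D, (z : E) ∈ Set.range χb → χb (T z) = T z := by
    intro z hz
    have h1 := hG₀l z hz
    have h2 := hG₀r (T z) (hG₀D (T z))
    rw [show (⟨G₀ (T z), hG₀D (T z)⟩ : ↥D) = z from Subtype.ext h1] at h2
    exact h2.symm
  -- ## Step 4 : `χb ∘ χb ∘ χb = χb ∘ χb`
  have hA : ∀ u : E, χb (χb (χb u)) = χb (χb u) := by
    intro u
    have h0 : T (⟨χb (G₀ u), hχbD ⟨G₀ u, hG₀D u⟩⟩ : ↥D) = χb (χb u) := by
      rw [hTχb ⟨G₀ u, hG₀D u⟩, hG₀r u (hG₀D u)]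
    have h1 := ht2 ⟨χb (G₀ u), hχbD ⟨G₀ u, hG₀D u⟩⟩ ⟨G₀ u, rfl⟩
    rw [h0] at h1
    exact h1
  -- ## Step 5 : `χb` fixes `H_χb z` for `z` in the range of `χb`
  have hdag : ∀ z : ↥D, (z : E) ∈ Set.range χb →
      χb (T z + χb ((H - T) ⟨χb (z : E), hχbD z⟩)) =
        T z + χb ((H - T) ⟨χb (z : E), hχbD z⟩) := by
    intro z hz
    have h1 := hGl z hz
    have h2 := hGr (T z + χb ((H - T) ⟨χb (z : E), hχbD z⟩)) (hGD _)
      (hχbD ⟨G (T z + χb ((H - T) ⟨χb (z : E), hχbD z⟩)), hGD _⟩)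
    have e1 : T (⟨G (T z + χb ((H - T) ⟨χb (z : E), hχbD z⟩)), hGD _⟩ : ↥D) = T z :=
      congrArg T (Subtype.ext h1)
    have e2 : (H - T) (⟨χb (G (T z + χb ((H - T) ⟨χb (z : E), hχbD z⟩))),
          hχbD ⟨G (T z + χb ((H - T) ⟨χb (z : E), hχbD z⟩)), hGD _⟩⟩ : ↥D) =
        (H - T) ⟨χb (z : E), hχbD z⟩ :=
      congrArg (H - T) (Subtype.ext
        (show χb (G (T z + χb ((H - T) ⟨χb (z : E), hχbD z⟩))) = χb (z : E) by rw [h1]))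
    rw [e1, e2] at h2
    exact h2.symm
  -- ## Step 6 : `χb` is idempotent-like on `χb (W χb z)` pieces
  have hBB : ∀ z : ↥D, (z : E) ∈ Set.range χb →
      χb (χb ((H - T) ⟨χb (z : E), hχbD z⟩)) = χb ((H - T) ⟨χb (z : E), hχbD z⟩) := by
    intro z hz
    have h1 := hdag z hz
    rw [map_add, ht2 z hz] at h1
    exact add_left_cancel h1
  -- ## Step 7 : kernel of `H_χb` is `χb`-null
  have hker : ∀ s : ↥D, T s + χb ((H - T) ⟨χb (s : E), hχbD s⟩) = 0 → χb (s : E) = 0 := by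
    intro s hs
    have hTs : χb (T s) = -χb (χb ((H - T) ⟨χb (s : E), hχbD s⟩)) := by
      have h := congrArg χb hs
      rw [map_add, map_zero] at h
      exact eq_neg_of_add_eq_zero_left h
    have h1 := hGl ⟨χb (s : E), hχbD s⟩ ⟨(s : E), rfl⟩
    have h2 := hGl ⟨χb (χb (s : E)), hχbD ⟨χb (s : E), hχbD s⟩⟩ ⟨χb (s : E), rfl⟩
    dsimp only at h1 h2
    have hT1 : T (⟨χb (s : E), hχbD s⟩ : ↥D) = χb (T s) := hTχb s
    have hT2 : T (⟨χb (χb (s : E)), hχbD ⟨χb (s : E), hχbD s⟩⟩ : ↥D) = χb (χb (T s)) := by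
      rw [hTχb ⟨χb (s : E), hχbD s⟩, hT1]
    have hTeq : χb (χb (T s)) = χb (T s) := by rw [hTs, map_neg, hA]
    have hW2 : (H - T) (⟨χb (χb (χb (s : E))),
          hχbD ⟨χb (χb (s : E)), hχbD ⟨χb (s : E), hχbD s⟩⟩⟩ : ↥D) =
        (H - T) (⟨χb (χb (s : E)), hχbD ⟨χb (s : E), hχbD s⟩⟩ : ↥D) :=
      congrArg (H - T) (Subtype.ext
        (show χb (χb (χb (s : E))) = χb (χb (s : E)) from hA _))
    have hInputEq : T (⟨χb (χb (s : E)), hχbD ⟨χb (s : E), hχbD s⟩⟩ : ↥D) +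
          χb ((H - T) (⟨χb (χb (χb (s : E))),
            hχbD ⟨χb (χb (s : E)), hχbD ⟨χb (s : E), hχbD s⟩⟩⟩ : ↥D)) =
        T (⟨χb (s : E), hχbD s⟩ : ↥D) +
          χb ((H - T) (⟨χb (χb (s : E)), hχbD ⟨χb (s : E), hχbD s⟩⟩ : ↥D)) := by
      rw [hT2, hTeq, ← hT1, hW2]
    have heq1 : χb (χb (s : E)) = χb (s : E) :=
      h2.symm.trans ((congrArg G hInputEq).trans h1)
    have hWa : (H - T) (⟨χb (χb (s : E)), hχbD ⟨χb (s : E), hχbD s⟩⟩ : ↥D) =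
        (H - T) (⟨χb (s : E), hχbD s⟩ : ↥D) :=
      congrArg (H - T) (Subtype.ext (show χb (χb (s : E)) = χb (s : E) from heq1))
    have hBB1 := hBB ⟨χb (s : E), hχbD s⟩ ⟨(s : E), rfl⟩
    dsimp only at hBB1
    rw [hWa] at hBB1
    have hin : T (⟨χb (s : E), hχbD s⟩ : ↥D) +
        χb ((H - T) (⟨χb (χb (s : E)), hχbD ⟨χb (s : E), hχbD s⟩⟩ : ↥D)) = 0 := by
      rw [hWa, hT1, hTs, hBB1]
      exact neg_add_cancel _
    rw [hin, map_zero] at h1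
    exact h1.symm
  -- ## Step 8 : determination of `χb (G w)`
  have hdet : ∀ (w : E) (z : ↥D),
      T z + χb ((H - T) ⟨χb (z : E), hχbD z⟩) = χb w → χb (G w) = χb (z : E) := by
    intro w z hz
    have hs : T ((⟨G w, hGD w⟩ : ↥D) - z) +
        χb ((H - T) ⟨χb (((⟨G w, hGD w⟩ : ↥D) - z : ↥D) : E),
          hχbD ((⟨G w, hGD w⟩ : ↥D) - z)⟩) = 0 := by
      have e : (H - T) (⟨χb (((⟨G w, hGD w⟩ : ↥D) - z : ↥D) : E),
            hχbD ((⟨G w, hGD w⟩ : ↥D) - z)⟩ : ↥D) =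
          (H - T) ((⟨χb (G w), hχbD ⟨G w, hGD w⟩⟩ : ↥D) - ⟨χb (z : E), hχbD z⟩) :=
        congrArg (H - T) (Subtype.ext (by
          show χb (((⟨G w, hGD w⟩ : ↥D) - z : ↥D) : E)
            = ((⟨χb (G w), hχbD ⟨G w, hGD w⟩⟩ : ↥D) - ⟨χb (z : E), hχbD z⟩ : ↥D)
          rw [Submodule.coe_sub, Submodule.coe_sub, map_sub]))
      rw [e, map_sub T, map_sub (H - T), map_sub χb, sub_add_sub_comm,
        hGr w (hGD w) (hχbD ⟨G w, hGD w⟩), hz, sub_self]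
    have h0 := hker _ hs
    rw [Submodule.coe_sub, map_sub, sub_eq_zero] at h0
    exact h0
  -- ## Step 9 : `H ∘ Q = χ ∘ F`
  have hHQ : ∀ z : ↥D,
      H ((⟨χ (z : E), hχD z⟩ : ↥D) -
          ⟨χb (G ((H - T) ⟨χ (z : E), hχD z⟩)),
            hχbD ⟨G ((H - T) ⟨χ (z : E), hχD z⟩), hGD ((H - T) ⟨χ (z : E), hχD z⟩)⟩⟩) =
        χ (feshbachOp χ χb D H T hχD hχbD G hGD z) := by
    intro z
    simp only [feshbachOp]
    rw [map_sub, hHapp, hHapp, hTχ z]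
    set u := (H - T) (⟨χ (z : E), hχD z⟩ : ↥D) with hu
    have hTB : T (⟨χb (G u), hχbD ⟨G u, hGD u⟩⟩ : ↥D) = χb (T ⟨G u, hGD u⟩) :=
      hTχb ⟨G u, hGD u⟩
    have h1 := hGr u (hGD u) (hχbD ⟨G u, hGD u⟩)
    rw [hTB, eq_sub_of_add_eq h1]
    set wb := (H - T) (⟨χb (G u), hχbD ⟨G u, hGD u⟩⟩ : ↥D) with hwb
    rw [map_sub χb, map_sub χ, map_add χ, eq_sub_of_add_eq (hsum u),
      eq_sub_of_add_eq (hsum wb)]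
    abel
  -- ## Step 10 : `H (χb G y) = χb χb y + χ χ W (χb G y)`
  have hHb : ∀ y : E,
      H (⟨χb (G y), hχbD ⟨G y, hGD y⟩⟩ : ↥D) =
        χb (χb y) + χ (χ ((H - T) ⟨χb (G y), hχbD ⟨G y, hGD y⟩⟩)) := by
    intro y
    have h1 := hGr y (hGD y) (hχbD ⟨G y, hGD y⟩)
    have hTB : T (⟨χb (G y), hχbD ⟨G y, hGD y⟩⟩ : ↥D) = χb (T ⟨G y, hGD y⟩) :=
      hTχb ⟨G y, hGD y⟩
    rw [hHapp, hTB, eq_sub_of_add_eq h1]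
    set wb := (H - T) (⟨χb (G y), hχbD ⟨G y, hGD y⟩⟩ : ↥D) with hwb
    rw [map_sub χb, eq_sub_of_add_eq (hsum wb)]
    abel
  -- ## Step 11 : `Q^# y ∈ Y` and the master surjectivity identity
  have hQsY : ∀ y : E, feshbachQsharp χ χb D H T hχbD G hGD y ∈ Y := by
    intro y
    simp only [feshbachQsharp]
    exact Y.sub_mem (hχY y) (hχY _)
  have hkey : ∀ (z : ↥D) (y : E),
      feshbachOp χ χb D H T hχD hχbD G hGD z = feshbachQsharp χ χb D H T hχbD G hGD y →
      H (((⟨χ (z : E), hχD z⟩ : ↥D) -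
            ⟨χb (G ((H - T) ⟨χ (z : E), hχD z⟩)),
              hχbD ⟨G ((H - T) ⟨χ (z : E), hχD z⟩), hGD ((H - T) ⟨χ (z : E), hχD z⟩)⟩⟩) +
          ⟨χb (G y), hχbD ⟨G y, hGD y⟩⟩) = y := by
    intro z y hzy
    rw [map_add, hHQ z, hzy, hHb y]
    simp only [feshbachQsharp]
    set wb := (H - T) (⟨χb (G y), hχbD ⟨G y, hGD y⟩⟩ : ↥D) with hwb
    rw [map_sub χ]
    conv_rhs => rw [← hsum y]
    abel
  -- ## Step 12 : `Q^# (H x) = F (χ x)`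
  have hQsH : ∀ x : ↥D,
      feshbachQsharp χ χb D H T hχbD G hGD (H x) =
        feshbachOp χ χb D H T hχD hχbD G hGD ⟨χ (x : E), hχD x⟩ := by
    intro x
    have hxs := hsplit x
    simp only [feshbachQsharp, feshbachOp]
    set u' := (H - T) (⟨χ (χ (x : E)), hχD ⟨χ (x : E), hχD x⟩⟩ : ↥D) with hu'
    have hWx : (H - T) x = u' +
        (H - T) (⟨χb (χb (x : E)), hχbD ⟨χb (x : E), hχbD x⟩⟩ : ↥D) := by
      conv_lhs => rw [hxs]
      rw [map_add, hu']
    have h1 := hGr u' (hGD u') (hχbD ⟨G u', hGD u'⟩)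
    have hcond : T ((⟨χb (x : E), hχbD x⟩ : ↥D) + ⟨G u', hGD u'⟩) +
        χb ((H - T) ⟨χb (((⟨χb (x : E), hχbD x⟩ : ↥D) + ⟨G u', hGD u'⟩ : ↥D) : E),
          hχbD ((⟨χb (x : E), hχbD x⟩ : ↥D) + ⟨G u', hGD u'⟩)⟩) = χb (H x) := by
      have e : (H - T) (⟨χb (((⟨χb (x : E), hχbD x⟩ : ↥D) + ⟨G u', hGD u'⟩ : ↥D) : E),
            hχbD ((⟨χb (x : E), hχbD x⟩ : ↥D) + ⟨G u', hGD u'⟩)⟩ : ↥D) =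
          (H - T) ((⟨χb (χb (x : E)), hχbD ⟨χb (x : E), hχbD x⟩⟩ : ↥D) +
            ⟨χb (G u'), hχbD ⟨G u', hGD u'⟩⟩) :=
        congrArg (H - T) (Subtype.ext (by
          show χb (((⟨χb (x : E), hχbD x⟩ : ↥D) + ⟨G u', hGD u'⟩ : ↥D) : E)
            = (((⟨χb (χb (x : E)), hχbD ⟨χb (x : E), hχbD x⟩⟩ : ↥D) +
              ⟨χb (G u'), hχbD ⟨G u', hGD u'⟩⟩ : ↥D) : E)
          rw [Submodule.coe_add, Submodule.coe_add, map_add]))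
      rw [e, map_add T, map_add (H - T), map_add χb, hTχb x]
      have hHx : χb (H x) = χb (T x) + (χb u' +
          χb ((H - T) (⟨χb (χb (x : E)), hχbD ⟨χb (x : E), hχbD x⟩⟩ : ↥D))) := by
        rw [hHapp x, hWx]
        simp only [map_add]
      rw [hHx, ← h1]
      abel
    have hGHx : χb (G (H x)) = χb (χb (x : E)) + χb (G u') := by
      have h := hdet (H x) _ hcond
      rw [h, Submodule.coe_add]
      dsimp only
      rw [map_add]
    rw [hTχ x]
    have e2 : (H - T) (⟨χb (G (H x)), hχbD ⟨G (H x), hGD (H x)⟩⟩ : ↥D) =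
        (H - T) ((⟨χb (χb (x : E)), hχbD ⟨χb (x : E), hχbD x⟩⟩ : ↥D) +
          ⟨χb (G u'), hχbD ⟨G u', hGD u'⟩⟩) :=
      congrArg (H - T) (Subtype.ext (by
        show χb (G (H x)) = (((⟨χb (χb (x : E)), hχbD ⟨χb (x : E), hχbD x⟩⟩ : ↥D) +
          ⟨χb (G u'), hχbD ⟨G u', hGD u'⟩⟩ : ↥D) : E)
        rw [hGHx, Submodule.coe_add]))
    have hHx2 : χ (H x) = χ (T x) + (χ u' +
        χ ((H - T) (⟨χb (χb (x : E)), hχbD ⟨χb (x : E), hχbD x⟩⟩ : ↥D))) := by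
      rw [hHapp x, hWx]
      simp only [map_add]
    rw [e2, map_add (H - T), map_add χ, hHx2]
    abel
  constructor
  · constructor
    · -- `H` invertible → `F` invertible in `Y`
      rintro ⟨Hinv, hHinvD, hHr, hHl⟩
      refine ⟨χ.comp (Hinv.comp χ) + χb.comp G₀, ?_, ?_, ?_⟩
      · intro y hy
        constructor
        · show χ (Hinv (χ y)) + χb (G₀ y) ∈ D
          exact D.add_mem (hχD ⟨Hinv (χ y), hHinvD (χ y)⟩) (hχbD ⟨G₀ y, hG₀D y⟩)
        · show χ (Hinv (χ y)) + χb (G₀ y) ∈ Y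
          exact Y.add_mem (hχY _) (hresY y hy)
      · -- right inverse of `F` on `Y`
        intro y hy h
        set p := Hinv (χ y) with hp
        set q := G₀ y with hq
        have hpD : p ∈ D := hHinvD (χ y)
        have hqD : q ∈ D := hG₀D y
        have hHp : H ⟨p, hpD⟩ = χ y := hHr (χ y) hpD
        have hTq : T ⟨q, hqD⟩ = χb y := hG₀r y hqD
        have hfD : (⟨(χ.comp (Hinv.comp χ) + χb.comp G₀) y, h⟩ : ↥D) =
            (⟨χ p, hχD ⟨p, hpD⟩⟩ : ↥D) + ⟨χb q, hχbD ⟨q, hqD⟩⟩ :=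
          Subtype.ext (by
            show (χ.comp (Hinv.comp χ) + χb.comp G₀) y = _
            rw [Submodule.coe_add]
            rfl)
        rw [hfD]
        simp only [feshbachOp]
        set w := (H - T) (⟨χ (((⟨χ p, hχD ⟨p, hpD⟩⟩ : ↥D) + ⟨χb q, hχbD ⟨q, hqD⟩⟩ : ↥D) : E),
          hχD ((⟨χ p, hχD ⟨p, hpD⟩⟩ : ↥D) + ⟨χb q, hχbD ⟨q, hqD⟩⟩)⟩ : ↥D) with hwdef
        have hwsplit : w =
            (H - T) (⟨χ (χ p), hχD ⟨χ p, hχD ⟨p, hpD⟩⟩⟩ : ↥D) +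
              (H - T) (⟨χ (χb q), hχD ⟨χb q, hχbD ⟨q, hqD⟩⟩⟩ : ↥D) := by
          rw [hwdef, ← map_add (H - T)]
          exact congrArg (H - T) (Subtype.ext (by
            show χ (((⟨χ p, hχD ⟨p, hpD⟩⟩ : ↥D) + ⟨χb q, hχbD ⟨q, hqD⟩⟩ : ↥D) : E) = _
            rw [Submodule.coe_add, Submodule.coe_add, map_add]))
        have r2 : (H - T) (⟨χ (χ p), hχD ⟨χ p, hχD ⟨p, hpD⟩⟩⟩ : ↥D) +
            (H - T) (⟨χb (χb p), hχbD ⟨χb p, hχbD ⟨p, hpD⟩⟩⟩ : ↥D) =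
            (H - T) ⟨p, hpD⟩ := by
          rw [← map_add]
          exact congrArg (H - T) (Subtype.ext (by
            show (((⟨χ (χ p), hχD ⟨χ p, hχD ⟨p, hpD⟩⟩⟩ : ↥D) +
              ⟨χb (χb p), hχbD ⟨χb p, hχbD ⟨p, hpD⟩⟩⟩ : ↥D) : E) = p
            rw [Submodule.coe_add]
            exact hsum p))
        have r3 : T (⟨p, hpD⟩ : ↥D) + (H - T) (⟨p, hpD⟩ : ↥D) = χ y := by
          rw [← hHapp, hHp]
        have hz : T ((⟨χ q, hχD ⟨q, hqD⟩⟩ : ↥D) - ⟨χb p, hχbD ⟨p, hpD⟩⟩) +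
            χb ((H - T) ⟨χb (((⟨χ q, hχD ⟨q, hqD⟩⟩ : ↥D) - ⟨χb p, hχbD ⟨p, hpD⟩⟩ : ↥D) : E),
              hχbD ((⟨χ q, hχD ⟨q, hqD⟩⟩ : ↥D) - ⟨χb p, hχbD ⟨p, hpD⟩⟩)⟩) = χb w := by
          have e3 : (H - T) (⟨χb (((⟨χ q, hχD ⟨q, hqD⟩⟩ : ↥D) -
                ⟨χb p, hχbD ⟨p, hpD⟩⟩ : ↥D) : E),
                hχbD ((⟨χ q, hχD ⟨q, hqD⟩⟩ : ↥D) - ⟨χb p, hχbD ⟨p, hpD⟩⟩)⟩ : ↥D) =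
              (H - T) ((⟨χ (χb q), hχD ⟨χb q, hχbD ⟨q, hqD⟩⟩⟩ : ↥D) -
                ⟨χb (χb p), hχbD ⟨χb p, hχbD ⟨p, hpD⟩⟩⟩) :=
            congrArg (H - T) (Subtype.ext (by
              show χb (((⟨χ q, hχD ⟨q, hqD⟩⟩ : ↥D) - ⟨χb p, hχbD ⟨p, hpD⟩⟩ : ↥D) : E) = _
              rw [Submodule.coe_sub, Submodule.coe_sub, map_sub]
              dsimp only
              rw [hcomm q]))
          rw [e3, map_sub T, map_sub (H - T), map_sub χb]
          rw [show T (⟨χ q, hχD ⟨q, hqD⟩⟩ : ↥D) = χ (T ⟨q, hqD⟩) from hTχ ⟨q, hqD⟩]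
          rw [show T (⟨χb p, hχbD ⟨p, hpD⟩⟩ : ↥D) = χb (T ⟨p, hpD⟩) from hTχb ⟨p, hpD⟩]
          rw [hTq, hwsplit, map_add χb]
          rw [eq_sub_of_add_eq' r2, eq_sub_of_add_eq' r3]
          rw [map_sub χb, map_sub χb, hcomm y]
          abel
        have hGw : χb (G w) = χb (χ q) - χb (χb p) := by
          have hd := hdet w _ hz
          rw [hd, Submodule.coe_sub]
          dsimp only
          rw [map_sub]
        have e4 : (H - T) (⟨χb (G w), hχbD ⟨G w, hGD w⟩⟩ : ↥D) =
            (H - T) ((⟨χ (χb q), hχD ⟨χb q, hχbD ⟨q, hqD⟩⟩⟩ : ↥D) -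
              ⟨χb (χb p), hχbD ⟨χb p, hχbD ⟨p, hpD⟩⟩⟩) :=
          congrArg (H - T) (Subtype.ext (by
            show χb (G w) = _
            rw [Submodule.coe_sub]
            dsimp only
            rw [hGw, hcomm q]))
        rw [map_add T]
        rw [show T (⟨χ p, hχD ⟨p, hpD⟩⟩ : ↥D) = χ (T ⟨p, hpD⟩) from hTχ ⟨p, hpD⟩]
        rw [show T (⟨χb q, hχbD ⟨q, hqD⟩⟩ : ↥D) = χb (T ⟨q, hqD⟩) from hTχb ⟨q, hqD⟩]
        rw [hwdef] at hwsplit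
        rw [hTq, e4, map_sub (H - T), map_sub χ, hwsplit, map_add χ]
        have r2' : χ ((H - T) (⟨χ (χ p), hχD ⟨χ p, hχD ⟨p, hpD⟩⟩⟩ : ↥D)) +
            χ ((H - T) (⟨χb (χb p), hχbD ⟨χb p, hχbD ⟨p, hpD⟩⟩⟩ : ↥D)) =
            χ ((H - T) ⟨p, hpD⟩) := by
          rw [← map_add, r2]
        have r3' : χ (T (⟨p, hpD⟩ : ↥D)) + χ ((H - T) (⟨p, hpD⟩ : ↥D)) = χ (χ y) := by
          rw [← map_add, r3]
        conv_rhs => rw [← hsum y, ← r3', ← r2']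
        abel
      · -- left inverse of `F` on `Y`
        intro x hxY
        show χ (Hinv (χ (feshbachOp χ χb D H T hχD hχbD G hGD x))) +
            χb (G₀ (feshbachOp χ χb D H T hχD hχbD G hGD x)) = (x : E)
        have h1 : Hinv (χ (feshbachOp χ χb D H T hχD hχbD G hGD x)) =
            χ (x : E) - χb (G ((H - T) ⟨χ (x : E), hχD x⟩)) := by
          rw [← hHQ x, hHl, Submodule.coe_sub]
        have hc : T ((⟨χb (x : E), hχbD x⟩ : ↥D) +
            ⟨χ (G ((H - T) ⟨χ (x : E), hχD x⟩)),
              hχD ⟨G ((H - T) ⟨χ (x : E), hχD x⟩), hGD ((H - T) ⟨χ (x : E), hχD x⟩)⟩⟩) =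
            χb (feshbachOp χ χb D H T hχD hχbD G hGD x) := by
          rw [map_add T]
          rw [show T (⟨χb (x : E), hχbD x⟩ : ↥D) = χb (T x) from hTχb x]
          rw [show T (⟨χ (G ((H - T) ⟨χ (x : E), hχD x⟩)),
              hχD ⟨G ((H - T) ⟨χ (x : E), hχD x⟩), hGD ((H - T) ⟨χ (x : E), hχD x⟩)⟩⟩ : ↥D) =
              χ (T ⟨G ((H - T) ⟨χ (x : E), hχD x⟩), hGD ((H - T) ⟨χ (x : E), hχD x⟩)⟩) from
            hTχ ⟨G ((H - T) ⟨χ (x : E), hχD x⟩), hGD ((H - T) ⟨χ (x : E), hχD x⟩)⟩]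
          have h3 := hGr ((H - T) ⟨χ (x : E), hχD x⟩)
            (hGD ((H - T) ⟨χ (x : E), hχD x⟩))
            (hχbD ⟨G ((H - T) ⟨χ (x : E), hχD x⟩), hGD ((H - T) ⟨χ (x : E), hχD x⟩)⟩)
          rw [eq_sub_of_add_eq h3]
          simp only [feshbachOp]
          rw [map_sub χ, map_sub χb, map_add χb]
          simp only [hcomm]
          abel
        have h2 : χb (G₀ (feshbachOp χ χb D H T hχD hχbD G hGD x)) =
            χb (χb (x : E)) + χ (χb (G ((H - T) ⟨χ (x : E), hχD x⟩))) := by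
          have hd := hdet₀ (feshbachOp χ χb D H T hχD hχbD G hGD x) _ hc
          rw [hd, Submodule.coe_add]
          dsimp only
          rw [map_add, ← hcomm (G ((H - T) ⟨χ (x : E), hχD x⟩))]
        rw [h1, h2, map_sub χ]
        conv_rhs => rw [← hsum (x : E)]
        abel
    · -- `F` invertible in `Y` → `H` invertible
      rintro ⟨Finv, hFD, hFr, hFl⟩
      have hFinvQsD : ∀ y : E, Finv (feshbachQsharp χ χb D H T hχbD G hGD y) ∈ D :=
        fun y => (hFD _ (hQsY y)).1
      have hInj : ∀ x : ↥D, H x = 0 → x = 0 := by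
        intro x hx
        have hF0 : feshbachOp χ χb D H T hχD hχbD G hGD ⟨χ (x : E), hχD x⟩ = 0 := by
          rw [← hQsH x, hx]
          simp only [feshbachQsharp]
          have e0 : (⟨χb (G (0 : E)), hχbD ⟨G (0 : E), hGD 0⟩⟩ : ↥D) = 0 :=
            Subtype.ext (by simp)
          rw [e0]
          simp
        have hχx : χ (x : E) = 0 := by
          have h1 := hFl ⟨χ (x : E), hχD x⟩ (hχY (x : E))
          rw [hF0, map_zero] at h1
          exact h1.symm
        have hxval : (x : E) = χb (χb (x : E)) := by
          conv_lhs => rw [← hsum (x : E)]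
          rw [hχx, map_zero, zero_add]
        have hχbx : χb (χb (x : E)) = 0 := by
          have hc : T (⟨χb (x : E), hχbD x⟩ : ↥D) +
              χb ((H - T) ⟨χb ((⟨χb (x : E), hχbD x⟩ : ↥D) : E),
                hχbD ⟨χb (x : E), hχbD x⟩⟩) = χb (0 : E) := by
            rw [show T (⟨χb (x : E), hχbD x⟩ : ↥D) = χb (T x) from hTχb x]
            rw [show (H - T) (⟨χb ((⟨χb (x : E), hχbD x⟩ : ↥D) : E),
                hχbD ⟨χb (x : E), hχbD x⟩⟩ : ↥D) = (H - T) x from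
              congrArg (H - T) (Subtype.ext (by
                show χb (χb (x : E)) = (x : E)
                exact hxval.symm))]
            rw [LinearMap.sub_apply, map_sub, hx, map_zero]
            abel
          have hd := hdet 0 _ hc
          simp only [map_zero] at hd
          exact hd.symm
        refine Subtype.ext ?_
        rw [hxval, hχbx, Submodule.coe_zero]
      have hInjH : Function.Injective H := by
        intro a b hab
        have h0 : a - b = 0 := hInj (a - b) (by rw [map_sub, hab, sub_self])
        exact sub_eq_zero.mp h0
      have hSurjH : Function.Surjective H := fun y =>
        ⟨_, hkey ⟨Finv (feshbachQsharp χ χb D H T hχbD G hGD y), hFinvQsD y⟩ y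
          (hFr _ (hQsY y) (hFinvQsD y))⟩
      have hbij : Function.Bijective H := ⟨hInjH, hSurjH⟩
      set Heq := LinearEquiv.ofBijective H hbij with hHeqdef
      have hHeqap : ∀ x : ↥D, Heq x = H x := fun x => rfl
      have hgraph : ((D.subtype.comp Heq.symm.toLinearMap).graph : Set (E × E)) =
          Prod.swap ⁻¹' {p : E × E | ∃ x : ↥D, (x : E) = p.1 ∧ H x = p.2} := by
        ext pr
        obtain ⟨a, b⟩ := pr
        simp only [SetLike.mem_coe, LinearMap.mem_graph_iff, Set.mem_preimage, Set.mem_setOf_eq,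
          Prod.swap_prod_mk, LinearMap.coe_comp, Function.comp_apply,
          LinearEquiv.coe_coe, Submodule.coe_subtype]
        constructor
        · intro hb
          refine ⟨Heq.symm a, hb.symm, ?_⟩
          have := Heq.apply_symm_apply a
          rw [hHeqap] at this
          exact this
        · rintro ⟨x, hx1, hx2⟩
          rw [← hx1, ← hx2, ← hHeqap, Heq.symm_apply_apply]
      have hclosed : IsClosed ((D.subtype.comp Heq.symm.toLinearMap).graph : Set (E × E)) := by
        rw [hgraph]
        exact hHcl.preimage continuous_swap
      refine ⟨⟨D.subtype.comp Heq.symm.toLinearMap,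
        (D.subtype.comp Heq.symm.toLinearMap).continuous_of_isClosed_graph hclosed⟩,
        ?_, ?_, ?_⟩
      · intro y
        exact (Heq.symm y).2
      · intro y hy
        rw [show (⟨(⟨D.subtype.comp Heq.symm.toLinearMap,
            (D.subtype.comp Heq.symm.toLinearMap).continuous_of_isClosed_graph hclosed⟩ :
              E →L[ℂ] E) y, hy⟩ : ↥D) = Heq.symm y from Subtype.ext rfl]
        have := Heq.apply_symm_apply y
        rw [hHeqap] at this
        exact this
      · intro x
        show ((Heq.symm (H x) : ↥D) : E) = (x : E)
        rw [← hHeqap, Heq.symm_apply_apply]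
  · -- the explicit formula for the inverse
    rintro Hinv Finv ⟨hHinvD, hHr, hHl⟩ ⟨hFD, hFr, hFl⟩ y h
    have hk := hkey ⟨Finv (feshbachQsharp χ χb D H T hχbD G hGD y), h⟩ y
      (hFr _ (hQsY y) h)
    have h3 := (congrArg Hinv hk).symm.trans (hHl _)
    rw [h3, Submodule.coe_add, Submodule.coe_sub]
    simp only [feshbachQ]
end

section
/- Let P(s) be a projection-valued analytic function on a connected, simply connected region X ⊆ ℂ with values in bounded operators on a Hilbert space, and set Q(s) = P'(s)P(s) − P(s)P'(s). Then P'(s) = [Q(s), P(s)], and the solutions U(s), V(s) of the linear ODEs U' = QU, U(s₀) = 1 and V' = −VQ, V(s₀) = 1 satisfy V U = U V = 1 and U(s) P(s₀) U(s)⁻¹ = P(s) for all s ∈ X. -/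
/-!
Differentiating `P² = P` gives `P'P + PP' = P'`, hence `PP'P = 0` and `P' = [Q, P]`.
With `U' = QU`, `V' = -VQ` and `W' = [Q, W]`, the product `V W U` has derivative zero; taking
`W = 1` and `W = P` shows that `VU` and `VPU` are constant on the connected set `X`, so
`VU = 1` and `VPU = P(s₀)`. Then `UV` is an idempotent depending continuously on `s`; since an
idempotent `e` with `‖e‖ < 1` vanishes (`‖e‖ ≤ ‖e‖²`), the set where `UV = 1` is open and
closed in `X`, so `UV = 1` on all of `X`, and `U P(s₀) V = (UV) P (UV) = P`.
-/

open scoped Topology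

theorem IsIdempotentElem.eq_zero_of_norm_lt_one {R : Type*} [NonUnitalNormedRing R] {e : R}
    (he : IsIdempotentElem e) (h : ‖e‖ < 1) : e = 0 := by
  have hle : ‖e‖ ≤ ‖e‖ * ‖e‖ := by
    simpa only [he.eq] using norm_mul_le e e
  exact norm_eq_zero.mp (by nlinarith [norm_nonneg e])

theorem IsIdempotentElem.eq_one_of_norm_one_sub_lt_one {R : Type*} [NormedRing R] {p : R}
    (hp : IsIdempotentElem p) (h : ‖1 - p‖ < 1) : p = 1 :=
  (sub_eq_zero.mp (hp.one_sub.eq_zero_of_norm_lt_one h)).symm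

theorem IsPreconnected.eq_one_of_isIdempotentElem {α R : Type*} [TopologicalSpace α]
    [NormedRing R] {X : Set α} (hX : IsPreconnected X) {W : α → R} (hW : ContinuousOn W X)
    (hidem : ∀ s ∈ X, IsIdempotentElem (W s)) {s₀ s : α} (hs₀ : s₀ ∈ X) (h₀ : W s₀ = 1)
    (hs : s ∈ X) : W s = 1 := by
  refine (hX.induction₂ (fun x y => W x = 1 ↔ W y = 1) ?_ (fun _ _ _ _ _ _ => Iff.trans)
    (fun _ _ _ _ => Iff.symm) hs₀ hs).mp h₀
  intro x hx
  by_cases hWx : W x = 1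
  · have hnear : ∀ᶠ y in 𝓝[X] x, ‖1 - W y‖ < 1 := by
      have hlim := ((hW x hx).const_sub 1).norm
      rw [hWx, sub_self, norm_zero] at hlim
      exact hlim.eventually_lt_const zero_lt_one
    filter_upwards [hnear, self_mem_nhdsWithin] with y hy hyX
    simp only [hWx, true_iff]
    exact (hidem y hyX).eq_one_of_norm_one_sub_lt_one hy
  · filter_upwards [(hW x hx).eventually_ne hWx] with y hy
    simp only [hWx, hy]

theorem IsIdempotentElem.eq_commutator_commutator {R : Type*} [Ring R] {p d : R}
    (hp : IsIdempotentElem p) (hd : d * p + p * d = d) :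
    d = (d * p - p * d) * p - p * (d * p - p * d) := by
  have hpdp : p * d * p = 0 := by
    have h : p * d * p = p * (d * p + p * d) * p := by rw [hd]
    have h' : p * (d * p + p * d) * p = p * d * (p * p) + (p * p) * d * p := by noncomm_ring
    rw [hp.eq] at h'
    exact left_eq_add.mp (h.trans h')
  calc d = d * p + p * d := hd.symm
    _ = d * (p * p) + (p * p) * d - p * d * p - p * d * p := by
        rw [hp.eq, hpdp, sub_zero, sub_zero]
    _ = (d * p - p * d) * p - p * (d * p - p * d) := by noncomm_ring

theorem IsOpen.eq_of_hasDerivAt_zero {𝕜 E : Type*} [RCLike 𝕜]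
    [NormedAddCommGroup E] [NormedSpace 𝕜 E] {X : Set 𝕜} (hXopen : IsOpen X)
    (hXconn : IsPreconnected X) {f : 𝕜 → E} (hf : ∀ s ∈ X, HasDerivAt f 0 s) {x y : 𝕜}
    (hx : x ∈ X) (hy : y ∈ X) : f x = f y :=
  hXopen.is_const_of_deriv_eq_zero hXconn
    (fun s hs => (hf s hs).differentiableAt.differentiableWithinAt)
    (fun s hs => (hf s hs).deriv) hx hy

section NormedAlgebra

variable {𝕜 A : Type*} [NontriviallyNormedField 𝕜] [NormedRing A] [NormedAlgebra 𝕜 A]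

theorem HasDerivAt.mul_add_mul_eq_of_eventually_isIdempotentElem {P : 𝕜 → A} {P' : A} {s : 𝕜}
    (hP : HasDerivAt P P' s) (hidem : ∀ᶠ t in 𝓝 s, IsIdempotentElem (P t)) :
    P' * P s + P s * P' = P' :=
  ((hP.mul hP).congr_of_eventuallyEq (hidem.mono fun _ ht => ht.eq.symm)).unique hP

theorem HasDerivAt.eq_commutator_commutator_of_eventually_isIdempotentElem {P : 𝕜 → A}
    {P' : A} {s : 𝕜} (hP : HasDerivAt P P' s) (hidem : ∀ᶠ t in 𝓝 s, IsIdempotentElem (P t)) :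
    P' = (P' * P s - P s * P') * P s - P s * (P' * P s - P s * P') :=
  hidem.self_of_nhds.eq_commutator_commutator
    (hP.mul_add_mul_eq_of_eventually_isIdempotentElem hidem)

theorem HasDerivAt.mul_mul_of_commutator {U V W : 𝕜 → A} {Q : A} {s : 𝕜}
    (hU : HasDerivAt U (Q * U s) s) (hV : HasDerivAt V (-(V s * Q)) s)
    (hW : HasDerivAt W (Q * W s - W s * Q) s) :
    HasDerivAt (fun t => V t * W t * U t) 0 s := by
  have hVW : HasDerivAt (fun t => V t * W t) (-(V s * Q) * W s + V s * (Q * W s - W s * Q)) s :=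
    hV.mul hW
  exact (hVW.mul hU).congr_deriv (by noncomm_ring)

end NormedAlgebra

theorem projection_conjugation_ode_general {H : Type*} [NormedAddCommGroup H]
    [InnerProductSpace ℂ H]
    (X : Set ℂ) (hXopen : IsOpen X) (hXconn : IsPreconnected X)
    (s₀ : ℂ) (hs₀ : s₀ ∈ X)
    (P : ℂ → H →L[ℂ] H)
    (hPanalytic : ∀ s ∈ X, DifferentiableAt ℂ P s)
    (hPproj : ∀ s ∈ X, P s * P s = P s)
    (U V : ℂ → H →L[ℂ] H)
    (hU : ∀ s ∈ X, HasDerivAt U ((deriv P s * P s - P s * deriv P s) * U s) s)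
    (hU₀ : U s₀ = 1)
    (hV : ∀ s ∈ X, HasDerivAt V (-(V s * (deriv P s * P s - P s * deriv P s))) s)
    (hV₀ : V s₀ = 1) :
    ∀ s ∈ X,
      deriv P s = (deriv P s * P s - P s * deriv P s) * P s -
          P s * (deriv P s * P s - P s * deriv P s) ∧
      V s * U s = 1 ∧ U s * V s = 1 ∧ U s * P s₀ * V s = P s := by
  have hP' : ∀ s ∈ X, deriv P s = (deriv P s * P s - P s * deriv P s) * P s -
      P s * (deriv P s * P s - P s * deriv P s) := fun s hs =>
    (hPanalytic s hs).hasDerivAt.eq_commutator_commutator_of_eventually_isIdempotentElem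
      (Filter.eventually_of_mem (hXopen.mem_nhds hs) hPproj)
  have hVU : ∀ s ∈ X, V s * U s = 1 := fun s hs => by
    have hconst := hXopen.eq_of_hasDerivAt_zero hXconn (f := fun t => V t * 1 * U t)
      (fun t ht => (hU t ht).mul_mul_of_commutator (hV t ht)
        (by simpa using hasDerivAt_const t (1 : H →L[ℂ] H))) hs hs₀
    simpa [hU₀, hV₀] using hconst
  have hVPU : ∀ s ∈ X, V s * P s * U s = P s₀ := fun s hs => by
    have hconst := hXopen.eq_of_hasDerivAt_zero hXconn
      (fun t ht => (hU t ht).mul_mul_of_commutator (hV t ht)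
        (hP' t ht ▸ (hPanalytic t ht).hasDerivAt)) hs hs₀
    simpa [hU₀, hV₀] using hconst
  have hUV : ∀ s ∈ X, U s * V s = 1 := fun s hs =>
    hXconn.eq_one_of_isIdempotentElem (W := fun t => U t * V t)
      (fun t ht => ((hU t ht).continuousAt.mul (hV t ht).continuousAt).continuousWithinAt)
      (fun t ht => by rw [IsIdempotentElem, mul_assoc, ← mul_assoc (V t), hVU t ht, one_mul])
      hs₀ (by rw [hU₀, hV₀, one_mul]) hs
  intro s hs
  refine ⟨hP' s hs, hVU s hs, hUV s hs, ?_⟩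
  calc U s * P s₀ * V s = U s * (V s * P s * U s) * V s := by rw [hVPU s hs]
    _ = U s * V s * P s * (U s * V s) := by noncomm_ring
    _ = P s := by rw [hUV s hs, one_mul, mul_one]

/-- Let `P` be a projection-valued analytic (holomorphic) function on a connected, simply
connected region `X ⊆ ℂ`, and set `Q(s) = P'(s)P(s) - P(s)P'(s)`.  Then
`P'(s) = [Q(s), P(s)]`, and the solutions `U`, `V` of the linear initial value problems
`U' = Q U`, `U(s₀) = 1` and `V' = -V Q`, `V(s₀) = 1` satisfy `V U = U V = 1` and
`U(s) P(s₀) U(s)⁻¹ = P(s)` for all `s ∈ X`. -/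
theorem projection_conjugation_ode {H : Type*} [NormedAddCommGroup H]
    [InnerProductSpace ℂ H] [CompleteSpace H]
    (X : Set ℂ) (hXopen : IsOpen X) (hXconn : IsPreconnected X)
    (hXsc : SimplyConnectedSpace ↥X)
    (s₀ : ℂ) (hs₀ : s₀ ∈ X)
    (P : ℂ → H →L[ℂ] H)
    (hPanalytic : ∀ s ∈ X, DifferentiableAt ℂ P s)
    (hPproj : ∀ s ∈ X, P s * P s = P s)
    (U V : ℂ → H →L[ℂ] H)
    (hUanalytic : ∀ s ∈ X, DifferentiableAt ℂ U s)
    (hVanalytic : ∀ s ∈ X, DifferentiableAt ℂ V s)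
    (hU : ∀ s ∈ X, HasDerivAt U ((deriv P s * P s - P s * deriv P s) * U s) s)
    (hU₀ : U s₀ = 1)
    (hV : ∀ s ∈ X, HasDerivAt V (-(V s * (deriv P s * P s - P s * deriv P s))) s)
    (hV₀ : V s₀ = 1) :
    ∀ s ∈ X,
      deriv P s = (deriv P s * P s - P s * deriv P s) * P s -
          P s * (deriv P s * P s - P s * deriv P s) ∧
      V s * U s = 1 ∧ U s * V s = 1 ∧ U s * P s₀ * V s = P s :=
  projection_conjugation_ode_general X hXopen hXconn s₀ hs₀ P hPanalytic hPproj U V hU hU₀ hV hV₀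
end
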